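/- arXiv:1811.06137 — 5 statements merged into one kernel-verified Lean document; each statement's English description precedes it below -/
import Mathlib

section
/- For every n ≥ 7, every edge-coloring of K_n with 3 colors contains a 2-connected subgraph on n−1 vertices whose edges use at most two of the three colors. -/
open Finset SimpleGraph

/-- A graph is `k`-connected if it has more than `k` vertices and removing any
set of fewer than `k` vertices leaves it connected. -/
def KConn {V : Type*} [Fintype V] (k : ℕ) (G : SimpleGraph V) : Prop :=
  k + 1 ≤ Fintype.card V ∧
    ∀ s : Finset V, s.card < k → (G.induce ((↑s : Set V)ᶜ)).Connected

/-- The host graph `B`, edge-colored by `c`, contains a rainbow copy of the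
pattern graph `H`. -/
def RainbowCopy {W V α : Type*} (H : SimpleGraph W) (B : SimpleGraph V)
    (c : Sym2 V → α) : Prop :=
  ∃ f : W → V, Function.Injective f ∧
    (∀ a b, H.Adj a b → B.Adj (f a) (f b)) ∧
    ∀ a b a' b', H.Adj a b → H.Adj a' b' →
      c s(f a, f b) = c s(f a', f b') → s(a, b) = s(a', b')

/-- Disjoint union of two simple graphs. -/
def disjUnion' {α β : Type*} (G : SimpleGraph α) (H : SimpleGraph β) :
    SimpleGraph (α ⊕ β) :=
  SimpleGraph.fromRel fun x y =>
    (∃ a b, x = Sum.inl a ∧ y = Sum.inl b ∧ G.Adj a b) ∨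
    (∃ a b, x = Sum.inr a ∧ y = Sum.inr b ∧ H.Adj a b)

/-- The monochromatic subgraph of `Kₙ` in color `i`. -/
def monoGraph {n m : ℕ} (c : Sym2 (Fin n) → Fin m) (i : Fin m) : SimpleGraph (Fin n) :=
  SimpleGraph.fromRel fun x y => c s(x, y) = i

/-- The subgraph of `Kₙ` using the two colors `i` and `j`. -/
def twoColorGraph {n m : ℕ} (c : Sym2 (Fin n) → Fin m) (i j : Fin m) : SimpleGraph (Fin n) :=
  SimpleGraph.fromRel fun x y => c s(x, y) = i ∨ c s(x, y) = j

/-- The coloring `c` of `Kₙ` uses all `m` colors. -/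
def UsesAll {n m : ℕ} (c : Sym2 (Fin n) → Fin m) : Prop :=
  ∀ i : Fin m, ∃ x y : Fin n, x ≠ y ∧ c s(x, y) = i

/-- No rainbow triangle. -/
def GallaiColoring {n m : ℕ} (c : Sym2 (Fin n) → Fin m) : Prop :=
  ¬ ∃ u v w : Fin n, u ≠ v ∧ v ≠ w ∧ u ≠ w ∧
    c s(u, v) ≠ c s(v, w) ∧ c s(v, w) ≠ c s(u, w) ∧ c s(u, v) ≠ c s(u, w)

/-- Monochromatic subgraph of `K_{s,t}` in color `i`. -/
def monoBiGraph {s t m : ℕ} (c : Sym2 (Fin s ⊕ Fin t) → Fin m) (i : Fin m) :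
    SimpleGraph (Fin s ⊕ Fin t) :=
  SimpleGraph.fromRel fun x y =>
    (completeBipartiteGraph (Fin s) (Fin t)).Adj x y ∧ c s(x, y) = i

/-- The coloring of `K_{s,t}` uses all `m` colors. -/
def UsesAllBi {s t m : ℕ} (c : Sym2 (Fin s ⊕ Fin t) → Fin m) : Prop :=
  ∀ i : Fin m, ∃ (u : Fin s) (v : Fin t), c s(Sum.inl u, Sum.inr v) = i

/-- Monochromatic path on `a` vertices in color `i`. -/
def HasMonoPath {n m : ℕ} (c : Sym2 (Fin n) → Fin m) (i : Fin m) (a : ℕ) : Prop :=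
  ∃ f : Fin a → Fin n, Function.Injective f ∧
    ∀ (j : ℕ) (h : j + 1 < a), c s(f ⟨j, by omega⟩, f ⟨j + 1, h⟩) = i

namespace Stmt4Aux

variable {n : ℕ}

lemma csymm (c : Sym2 (Fin n) → Fin 3) (a b : Fin n) : c s(a, b) = c s(b, a) := by
  rw [Sym2.eq_swap]

lemma fin3_cases (m k : Fin 3) (h1 : m ≠ k + 1) (h2 : m ≠ k + 2) : m = k := by
  revert h1 h2; revert m k; decide

/-- A "join": a complete-bipartite-like cut certificate for color `k`,
partitioning all vertices except `v` and `u` into `A` and `B` with all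
cross edges colored `k`. -/
structure Join (c : Sym2 (Fin n) → Fin 3) (k : Fin 3) (v : Fin n) : Type where
  u : Fin n
  A : Set (Fin n)
  B : Set (Fin n)
  hA : A.Nonempty
  hB : B.Nonempty
  hAvu : ∀ a, a ∈ A → a ≠ v ∧ a ≠ u
  hBvu : ∀ b, b ∈ B → b ≠ v ∧ b ≠ u
  hdisj : ∀ t, t ∈ A → t ∈ B → False
  htot : ∀ t, t ≠ v → t ≠ u → t ∈ A ∨ t ∈ B
  hcross : ∀ a, a ∈ A → ∀ b, b ∈ B → c s(a, b) = k

variable {c : Sym2 (Fin n) → Fin 3}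

/-- `x`'s edges all have color `k` except possibly towards `v`, `e`. -/
def HubRow (c : Sym2 (Fin n) → Fin 3) (v x e : Fin n) (k : Fin 3) : Prop :=
  ∀ z, z ≠ v → z ≠ x → z ≠ e → c s(x, z) = k

def Culp {k k' : Fin 3} {v : Fin n} (J : Join c k v) (J' : Join c k' v) : Prop :=
  J.A ⊆ {J'.u} ∨ J.B ⊆ {J'.u}

lemma culp_or_culp {k k' : Fin 3} {v : Fin n} (hkk' : k ≠ k')
    (J : Join c k v) (J' : Join c k' v) : Culp J J' ∨ Culp J' J := by
  have or12 : (∀ t, t ∈ J.A → t ∈ J'.A → False) ∨ (∀ t, t ∈ J.B → t ∈ J'.B → False) := by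
    by_contra h
    push_neg at h
    obtain ⟨⟨a, haA, haA', -⟩, ⟨b, hbB, hbB', -⟩⟩ := h
    have h1 := J.hcross a haA b hbB
    have h2 := J'.hcross a haA' b hbB'
    rw [h1] at h2; exact hkk' h2
  have or34 : (∀ t, t ∈ J.A → t ∈ J'.B → False) ∨ (∀ t, t ∈ J.B → t ∈ J'.A → False) := by
    by_contra h
    push_neg at h
    obtain ⟨⟨a, haA, haB', -⟩, ⟨b, hbB, hbA', -⟩⟩ := h
    have h1 := J.hcross a haA b hbB
    have h2 := J'.hcross b hbA' a haB'
    rw [csymm c b a] at h2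
    rw [h1] at h2; exact hkk' h2
  rcases or12 with n1 | n2 <;> rcases or34 with n3 | n4
  · -- J.A misses J'.A and J'.B : J.A ⊆ {J'.u}
    left; left
    intro a ha
    have hv := (J.hAvu a ha).1
    have hau : a = J'.u := by
      by_contra hu
      rcases J'.htot a hv hu with h | h
      · exact n1 a ha h
      · exact n3 a ha h
    simp [hau]
  · -- J'.A misses J.A and J.B
    right; left
    intro a ha
    have hv := (J'.hAvu a ha).1
    have hau : a = J.u := by
      by_contra hu
      rcases J.htot a hv hu with h | h
      · exact n1 a h ha
      · exact n4 a h ha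
    simp [hau]
  · -- J'.B misses J.A and J.B
    right; right
    intro b hb
    have hbu : b = J.u := by
      by_contra hu
      rcases J.htot b (J'.hBvu b hb).1 hu with h | h
      · exact n3 b h hb
      · exact n2 b h hb
    simp [hbu]
  · -- J.B misses J'.A and J'.B
    left; right
    intro b hb
    have hbu : b = J'.u := by
      by_contra hu
      rcases J'.htot b (J.hBvu b hb).1 hu with h | h
      · exact n4 b hb h
      · exact n2 b hb h
    simp [hbu]

lemma hub_of_culp {k k' : Fin 3} {v : Fin n} {J : Join c k v} {J' : Join c k' v}
    (h : Culp J J') : J'.u ≠ v ∧ J'.u ≠ J.u ∧ HubRow c v J'.u J.u k := by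
  rcases h with h | h
  · obtain ⟨a, ha⟩ := J.hA
    have hau : a = J'.u := by simpa using h ha
    rw [hau] at ha
    refine ⟨(J.hAvu _ ha).1, (J.hAvu _ ha).2, ?_⟩
    intro t htv htx hte
    rcases J.htot t htv hte with hA | hB
    · exact absurd (by simpa using h hA) htx
    · exact J.hcross _ ha t hB
  · obtain ⟨b, hb⟩ := J.hB
    have hbu : b = J'.u := by simpa using h hb
    rw [hbu] at hb
    refine ⟨(J.hBvu _ hb).1, (J.hBvu _ hb).2, ?_⟩
    intro t htv htx hte
    rcases J.htot t htv hte with hA | hB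
    · rw [csymm c (J'.u) t]
      exact J.hcross t hA _ hb
    · exact absurd (by simpa using h hB) htx

lemma card_quad_le (a b d e : Fin n) : ({a, b, d, e} : Finset (Fin n)).card ≤ 4 := by
  apply le_trans (card_insert_le _ _)
  have h2 : ({b, d, e} : Finset (Fin n)).card ≤ 3 := by
    apply le_trans (card_insert_le _ _)
    have h3 : ({d, e} : Finset (Fin n)).card ≤ 2 := by
      apply le_trans (card_insert_le _ _)
      simp
    omega
  omega

lemma noDouble (hn : 7 ≤ n) {kp kq kr : Fin 3} {v : Fin n} (hqr : kq ≠ kr)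
    (Jp : Join c kp v) (Jq : Join c kq v) (Jr : Join c kr v)
    (h1 : Culp Jp Jq) (h2 : Culp Jp Jr) : False := by
  have key : Jq.u = Jr.u → False := by
    intro hequ
    rcases culp_or_culp hqr Jq Jr with hc | hc
    · rcases hc with hc | hc
      · obtain ⟨a, ha⟩ := Jq.hA
        have : a = Jr.u := by simpa using hc ha
        exact (Jq.hAvu a ha).2 (this.trans hequ.symm)
      · obtain ⟨a, ha⟩ := Jq.hB
        have : a = Jr.u := by simpa using hc ha
        exact (Jq.hBvu a ha).2 (this.trans hequ.symm)
    · rcases hc with hc | hc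
      · obtain ⟨a, ha⟩ := Jr.hA
        have : a = Jq.u := by simpa using hc ha
        exact (Jr.hAvu a ha).2 (this.trans hequ)
      · obtain ⟨a, ha⟩ := Jr.hB
        have : a = Jq.u := by simpa using hc ha
        exact (Jr.hBvu a ha).2 (this.trans hequ)
  have small : (∀ t : Fin n, t = v ∨ t = Jp.u ∨ t = Jq.u ∨ t = Jr.u) → False := by
    intro hall
    have hsub : (Finset.univ : Finset (Fin n)) ⊆ {v, Jp.u, Jq.u, Jr.u} := by
      intro t _
      simp only [Finset.mem_insert, Finset.mem_singleton]
      exact hall t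
    have := Finset.card_le_card hsub
    rw [Finset.card_univ, Fintype.card_fin] at this
    have h4 := card_quad_le v Jp.u Jq.u Jr.u
    omega
  rcases h1 with h1 | h1 <;> rcases h2 with h2 | h2
  · obtain ⟨a, ha⟩ := Jp.hA
    exact key (((by simpa using h1 ha : a = Jq.u)).symm.trans (by simpa using h2 ha))
  · -- Jp.A ⊆ {Jq.u}, Jp.B ⊆ {Jr.u}
    apply small
    intro t
    by_cases htv : t = v
    · exact Or.inl htv
    by_cases htu : t = Jp.u
    · exact Or.inr (Or.inl htu)
    rcases Jp.htot t htv htu with h | h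
    · exact Or.inr (Or.inr (Or.inl (by simpa using h1 h)))
    · exact Or.inr (Or.inr (Or.inr (by simpa using h2 h)))
  · apply small
    intro t
    by_cases htv : t = v
    · exact Or.inl htv
    by_cases htu : t = Jp.u
    · exact Or.inr (Or.inl htu)
    rcases Jp.htot t htv htu with h | h
    · exact Or.inr (Or.inr (Or.inr (by simpa using h2 h)))
    · exact Or.inr (Or.inr (Or.inl (by simpa using h1 h)))
  · obtain ⟨a, ha⟩ := Jp.hB
    exact key (((by simpa using h1 ha : a = Jq.u)).symm.trans (by simpa using h2 ha))

/-- The rigid structure at a vertex `v`: a "rainbow near-spanning triple". -/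
def Sig (c : Sym2 (Fin n) → Fin 3) (v : Fin n) : Prop :=
  ∃ x y z : Fin n, ∃ p q r : Fin 3,
    x ≠ v ∧ y ≠ v ∧ z ≠ v ∧ x ≠ y ∧ y ≠ z ∧ x ≠ z ∧
    p ≠ q ∧ q ≠ r ∧ p ≠ r ∧
    HubRow c v x z p ∧ HubRow c v y x q ∧ HubRow c v z y r

lemma sigma_of_N (hn : 7 ≤ n) (hN : ∀ (k : Fin 3) (v : Fin n), Nonempty (Join c k v))
    (v : Fin n) : Sig c v := by
  obtain ⟨J0⟩ := hN 0 v
  obtain ⟨J1⟩ := hN 1 v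
  obtain ⟨J2⟩ := hN 2 v
  have D01 := culp_or_culp (by decide : (0 : Fin 3) ≠ 1) J0 J1
  have D02 := culp_or_culp (by decide : (0 : Fin 3) ≠ 2) J0 J2
  have D12 := culp_or_culp (by decide : (1 : Fin 3) ≠ 2) J1 J2
  rcases D01 with c01 | c10 <;> rcases D02 with c02 | c20 <;> rcases D12 with c12 | c21
  · exact absurd (noDouble hn (by decide : (1:Fin 3) ≠ 2) J0 J1 J2 c01 c02) id
  · exact absurd (noDouble hn (by decide : (1:Fin 3) ≠ 2) J0 J1 J2 c01 c02) id
  · -- pattern A : side J0 = {J1.u}, side J2 = {J0.u}, side J1 = {J2.u}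
    obtain ⟨h1v, h10, H0⟩ := hub_of_culp c01   -- HubRow v J1.u J0.u 0
    obtain ⟨h0v, h02, H2⟩ := hub_of_culp c20   -- HubRow v J0.u J2.u 2
    obtain ⟨h2v, h21, H1⟩ := hub_of_culp c12   -- HubRow v J2.u J1.u 1
    exact ⟨J1.u, J2.u, J0.u, 0, 1, 2, h1v, h2v, h0v, fun h => h21 h.symm, fun h => h02 h.symm,
      h10, by decide, by decide, by decide, H0, H1, H2⟩
  · exact absurd (noDouble hn (by decide : (0:Fin 3) ≠ 1) J2 J0 J1 c20 c21) id
  · exact absurd (noDouble hn (by decide : (0:Fin 3) ≠ 2) J1 J0 J2 c10 c12) id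
  · -- pattern B : side J1 = {J0.u}, side J0 = {J2.u}, side J2 = {J1.u}
    obtain ⟨h0v, h01, H1'⟩ := hub_of_culp c10  -- HubRow v J0.u J1.u 1
    obtain ⟨h2v, h20, H0'⟩ := hub_of_culp c02  -- HubRow v J2.u J0.u 0
    obtain ⟨h1v, h12, H2'⟩ := hub_of_culp c21  -- HubRow v J1.u J2.u 2
    exact ⟨J2.u, J1.u, J0.u, 0, 2, 1, h2v, h1v, h0v, fun h => h12 h.symm, fun h => h01 h.symm,
      h20, by decide, by decide, by decide, H0', H2', H1'⟩
  · exact absurd (noDouble hn (by decide : (0:Fin 3) ≠ 2) J1 J0 J2 c10 c12) id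
  · exact absurd (noDouble hn (by decide : (0:Fin 3) ≠ 1) J2 J0 J1 c20 c21) id

lemma hub_loc {v x y z : Fin n} {p q r : Fin 3} {v' w e : Fin n} {β : Fin 3}
    (hxy : x ≠ y) (hyz : y ≠ z) (hxz : x ≠ z)
    (hpq : p ≠ q) (hqr : q ≠ r) (hpr : p ≠ r)
    (Hx : HubRow c v x z p) (Hy : HubRow c v y x q) (Hz : HubRow c v z y r)
    (hv'x : v' ≠ x) (hv'y : v' ≠ y) (hv'z : v' ≠ z)
    (hw : HubRow c v' w e β)
    (hwv : w ≠ v) (hwx : w ≠ x) (hwy : w ≠ y) (hwz : w ≠ z) : False := by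
  by_cases hex : e = x
  · have h1 : c s(w, y) = β := hw y (Ne.symm hv'y) (Ne.symm hwy) (by rw [hex]; exact Ne.symm hxy)
    have h2 : c s(y, w) = q := Hy w hwv hwy hwx
    have h3 : c s(w, z) = β := hw z (Ne.symm hv'z) (Ne.symm hwz) (by rw [hex]; exact Ne.symm hxz)
    have h4 : c s(z, w) = r := Hz w hwv hwz hwy
    rw [csymm c w y, h2] at h1
    rw [csymm c w z, h4] at h3
    exact hqr (h1.trans h3.symm)
  · by_cases hey : e = y
    · have h1 : c s(w, x) = β := hw x (Ne.symm hv'x) (Ne.symm hwx) (by rw [hey]; exact hxy)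
      have h2 : c s(x, w) = p := Hx w hwv hwx hwz
      have h3 : c s(w, z) = β := hw z (Ne.symm hv'z) (Ne.symm hwz) (by rw [hey]; exact Ne.symm hyz)
      have h4 : c s(z, w) = r := Hz w hwv hwz hwy
      rw [csymm c w x, h2] at h1
      rw [csymm c w z, h4] at h3
      exact hpr (h1.trans h3.symm)
    · have h1 : c s(w, x) = β := hw x (Ne.symm hv'x) (Ne.symm hwx) (fun h => hex h.symm)
      have h2 : c s(x, w) = p := Hx w hwv hwx hwz
      have h3 : c s(w, y) = β := hw y (Ne.symm hv'y) (Ne.symm hwy) (fun h => hey h.symm)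
      have h4 : c s(y, w) = q := Hy w hwv hwy hwx
      rw [csymm c w x, h2] at h1
      rw [csymm c w y, h4] at h3
      exact hpq (h1.trans h3.symm)

lemma exists_fresh (s : Finset (Fin n)) (h : s.card < n) : ∃ a : Fin n, a ∉ s := by
  by_contra hc
  push_neg at hc
  have hsub : (Finset.univ : Finset (Fin n)) ⊆ s := fun a _ => hc a
  have := Finset.card_le_card hsub
  rw [Finset.card_univ, Fintype.card_fin] at this
  omega

lemma card_quint_le (a b d e f : Fin n) : ({a, b, d, e, f} : Finset (Fin n)).card ≤ 5 := by
  apply le_trans (card_insert_le _ _)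
  have := card_quad_le b d e f
  omega

lemma main_contra (hn : 7 ≤ n) (c : Sym2 (Fin n) → Fin 3) :
    ∃ (k : Fin 3) (v : Fin n), ¬ Nonempty (Join c k v) := by
  by_contra hcon
  have hN : ∀ (k : Fin 3) (v : Fin n), Nonempty (Join c k v) := by
    intro k v
    by_contra h
    exact hcon ⟨k, v, h⟩
  clear hcon
  obtain ⟨x, y, z, p, q, r, hxv, hyv, hzv, hxy, hyz, hxz, hpq, hqr, hpr, Hx, Hy, Hz⟩ :=
    sigma_of_N hn hN (⟨0, by omega⟩ : Fin n)
  set v0 : Fin n := (⟨0, by omega⟩ : Fin n)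
  -- pick v' outside {v0, x, y, z}
  obtain ⟨v', hv'⟩ := exists_fresh {v0, x, y, z} (by have := card_quad_le v0 x y z; omega)
  simp only [Finset.mem_insert, Finset.mem_singleton, not_or] at hv'
  obtain ⟨hv'0, hv'x, hv'y, hv'z⟩ := hv'
  obtain ⟨x', y', z', p', q', r', hx'v, hy'v, hz'v, hx'y, hy'z, hx'z, hpq', hqr', hpr',
    Hx', Hy', Hz'⟩ := sigma_of_N hn hN v'
  -- each v'-hub lies in {v0, x, y, z}
  have loc : ∀ w e β, HubRow c v' w e β → (w = v0 ∨ w = x ∨ w = y ∨ w = z) := by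
    intro w e β hw
    by_contra hmem
    push_neg at hmem
    obtain ⟨h1, h2, h3, h4⟩ := hmem
    exact hub_loc hxy hyz hxz hpq hqr hpr Hx Hy Hz hv'x hv'y hv'z hw h1 h2 h3 h4
  have lx' := loc x' z' p' Hx'
  have ly' := loc y' x' q' Hy'
  have lz' := loc z' y' r' Hz'
  -- pick v'' outside {v0, x, y, z, v'}
  obtain ⟨v'', hv''⟩ := exists_fresh {v0, x, y, z, v'} (by have := card_quint_le v0 x y z v'; omega)
  simp only [Finset.mem_insert, Finset.mem_singleton, not_or] at hv''
  obtain ⟨hv''0, hv''x, hv''y, hv''z, hv''v'⟩ := hv''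
  have hv''notin : ∀ w, (w = v0 ∨ w = x ∨ w = y ∨ w = z) → v'' ≠ w := by
    rintro w (rfl | rfl | rfl | rfl)
    exacts [hv''0, hv''x, hv''y, hv''z]
  obtain ⟨x2, y2, z2, p2, q2, r2, hx2v, hy2v, hz2v, hx2y2, hy2z2, hx2z2, hpq2, hqr2, hpr2,
    Hx2, Hy2, Hz2⟩ := sigma_of_N hn hN v''
  -- each v''-hub lies in {x', y', z'}
  have loc2 : ∀ w e β, HubRow c v'' w e β → (w = x' ∨ w = y' ∨ w = z') := by
    intro w e β hw
    have l0 : w = v0 ∨ w = x ∨ w = y ∨ w = z := by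
      by_contra hmem
      push_neg at hmem
      obtain ⟨h1, h2, h3, h4⟩ := hmem
      exact hub_loc hxy hyz hxz hpq hqr hpr Hx Hy Hz hv''x hv''y hv''z hw h1 h2 h3 h4
    have l1 : w = v' ∨ w = x' ∨ w = y' ∨ w = z' := by
      by_contra hmem
      push_neg at hmem
      obtain ⟨h1, h2, h3, h4⟩ := hmem
      exact hub_loc hx'y hy'z hx'z hpq' hqr' hpr' Hx' Hy' Hz'
        (hv''notin x' lx') (hv''notin y' ly') (hv''notin z' lz') hw h1 h2 h3 h4
    rcases l1 with h | h | h | h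
    · exfalso
      rcases l0 with h0 | h0 | h0 | h0 <;> rw [h] at h0
      · exact hv'0 h0
      · exact hv'x h0
      · exact hv'y h0
      · exact hv'z h0
    · exact Or.inl h
    · exact Or.inr (Or.inl h)
    · exact Or.inr (Or.inr h)
  have mx2 := loc2 x2 z2 p2 Hx2
  have my2 := loc2 y2 x2 q2 Hy2
  have mz2 := loc2 z2 y2 r2 Hz2
  -- pigeonhole : x' and y' are v''-hubs
  have pigeon : ∀ w : Fin n, w = x' ∨ w = y' ∨ w = z' →
      ((w = x' ∨ w = y' ∨ w = z') ∧ True) := fun w h => ⟨h, trivial⟩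
  have hx'hub : ∃ e β, HubRow c v'' x' e β := by
    have hmem : x' = x2 ∨ x' = y2 ∨ x' = z2 := by
      by_contra hcc
      push_neg at hcc
      obtain ⟨a1, a2, a3⟩ := hcc
      have m1 : x2 = y' ∨ x2 = z' := by
        rcases mx2 with h | h | h
        · exact absurd h.symm a1
        · exact Or.inl h
        · exact Or.inr h
      have m2 : y2 = y' ∨ y2 = z' := by
        rcases my2 with h | h | h
        · exact absurd h.symm a2
        · exact Or.inl h
        · exact Or.inr h
      have m3 : z2 = y' ∨ z2 = z' := by
        rcases mz2 with h | h | h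
        · exact absurd h.symm a3
        · exact Or.inl h
        · exact Or.inr h
      rcases m1 with h1 | h1 <;> rcases m2 with h2 | h2 <;> rcases m3 with h3 | h3
      · exact hx2y2 (h1.trans h2.symm)
      · exact hx2y2 (h1.trans h2.symm)
      · exact hx2z2 (h1.trans h3.symm)
      · exact hy2z2 (h2.trans h3.symm)
      · exact hy2z2 (h2.trans h3.symm)
      · exact hx2z2 (h1.trans h3.symm)
      · exact hx2y2 (h1.trans h2.symm)
      · exact hx2y2 (h1.trans h2.symm)
    rcases hmem with h | h | h
    · exact ⟨z2, p2, by rw [h]; exact Hx2⟩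
    · exact ⟨x2, q2, by rw [h]; exact Hy2⟩
    · exact ⟨y2, r2, by rw [h]; exact Hz2⟩
  have hy'hub : ∃ e β, HubRow c v'' y' e β := by
    have hmem : y' = x2 ∨ y' = y2 ∨ y' = z2 := by
      by_contra hcc
      push_neg at hcc
      obtain ⟨a1, a2, a3⟩ := hcc
      have m1 : x2 = x' ∨ x2 = z' := by
        rcases mx2 with h | h | h
        · exact Or.inl h
        · exact absurd h.symm a1
        · exact Or.inr h
      have m2 : y2 = x' ∨ y2 = z' := by
        rcases my2 with h | h | h
        · exact Or.inl h
        · exact absurd h.symm a2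
        · exact Or.inr h
      have m3 : z2 = x' ∨ z2 = z' := by
        rcases mz2 with h | h | h
        · exact Or.inl h
        · exact absurd h.symm a3
        · exact Or.inr h
      rcases m1 with h1 | h1 <;> rcases m2 with h2 | h2 <;> rcases m3 with h3 | h3
      · exact hx2y2 (h1.trans h2.symm)
      · exact hx2y2 (h1.trans h2.symm)
      · exact hx2z2 (h1.trans h3.symm)
      · exact hy2z2 (h2.trans h3.symm)
      · exact hy2z2 (h2.trans h3.symm)
      · exact hx2z2 (h1.trans h3.symm)
      · exact hx2y2 (h1.trans h2.symm)
      · exact hx2y2 (h1.trans h2.symm)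
    rcases hmem with h | h | h
    · exact ⟨z2, p2, by rw [h]; exact Hx2⟩
    · exact ⟨x2, q2, by rw [h]; exact Hy2⟩
    · exact ⟨y2, r2, by rw [h]; exact Hz2⟩
  obtain ⟨e1, β1, Rx'⟩ := hx'hub
  obtain ⟨e2, β2, Ry'⟩ := hy'hub
  have hz'v'' : z' ≠ v'' := fun h => hv''notin z' lz' h.symm
  have hx'v'' : x' ≠ v'' := fun h => hv''notin x' lx' h.symm
  have hy'v'' : y' ≠ v'' := fun h => hv''notin y' ly' h.symm
  -- color match for x' : β1 = p'
  obtain ⟨t, ht⟩ := exists_fresh {v', v'', z', e1, x'} (by have := card_quint_le v' v'' z' e1 x'; omega)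
  simp only [Finset.mem_insert, Finset.mem_singleton, not_or] at ht
  obtain ⟨htv', htv'', htz', hte1, htx'⟩ := ht
  have hβ1 : β1 = p' := by
    have h1 : c s(x', t) = β1 := Rx' t htv'' htx' hte1
    have h2 : c s(x', t) = p' := Hx' t htv' htx' htz'
    rw [h1] at h2
    exact h2
  -- color match for y' : β2 = q'
  obtain ⟨t2, ht2⟩ := exists_fresh {v', v'', x', e2, y'} (by have := card_quint_le v' v'' x' e2 y'; omega)
  simp only [Finset.mem_insert, Finset.mem_singleton, not_or] at ht2
  obtain ⟨h2tv', h2tv'', h2tx', h2te2, h2ty'⟩ := ht2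
  have hβ2 : β2 = q' := by
    have h1 : c s(y', t2) = β2 := Ry' t2 h2tv'' h2ty' h2te2
    have h2 : c s(y', t2) = q' := Hy' t2 h2tv' h2ty' h2tx'
    rw [h1] at h2
    exact h2
  rw [hβ1] at Rx'
  rw [hβ2] at Ry'
  -- pred match for x' : e1 = z'
  have fullx' : ∀ t, t ≠ x' → t ≠ z' → c s(x', t) = p' := by
    have he1 : e1 = z' := by
      by_contra hne
      have h1 : c s(x', z') = p' := Rx' z' hz'v'' (Ne.symm hx'z) (fun h => hne h.symm)
      have h2 : c s(z', x') = r' := Hz' x' hx'v hx'z hx'y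
      rw [csymm c x' z', h2] at h1
      exact hpr' h1.symm
    rw [he1] at Rx'
    intro t htx htz
    by_cases htv : t = v'
    · rw [htv]
      exact Rx' v' (Ne.symm hv''v') (Ne.symm hx'v) (Ne.symm hz'v)
    · exact Hx' t htv htx htz
  -- pred match for y' : e2 = x'
  have fully' : ∀ t, t ≠ y' → t ≠ x' → c s(y', t) = q' := by
    have he2 : e2 = x' := by
      by_contra hne
      have h1 : c s(y', x') = q' := Ry' x' hx'v'' hx'y (fun h => hne h.symm)
      have h2 : c s(x', y') = p' := Hx' y' hy'v (Ne.symm hx'y) hy'z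
      rw [csymm c y' x', h2] at h1
      exact hpq' h1
    rw [he2] at Ry'
    intro t hty htx
    by_cases htv : t = v'
    · rw [htv]
      exact Ry' v' (Ne.symm hv''v') (Ne.symm hy'v) (Ne.symm hx'v)
    · exact Hy' t htv hty htx
  -- final contradiction using an r'-join avoiding z'
  obtain ⟨J⟩ := hN r' z'
  have hux : J.u = x' := by
    by_contra hne
    rcases J.htot x' hx'z (fun h => hne h.symm) with hA | hB
    · obtain ⟨b, hb⟩ := J.hB
      have h1 : c s(x', b) = r' := J.hcross x' hA b hb
      have h2 : c s(x', b) = p' := fullx' b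
        (fun hbe => J.hdisj x' hA (hbe ▸ hb)) (J.hBvu b hb).1
      rw [h1] at h2
      exact hpr' h2.symm
    · obtain ⟨a, ha⟩ := J.hA
      have h1 : c s(a, x') = r' := J.hcross a ha x' hB
      have h2 : c s(x', a) = p' := fullx' a
        (fun hae => J.hdisj x' (hae ▸ ha) hB) (J.hAvu a ha).1
      rw [csymm c a x', h2] at h1
      exact hpr' h1
  rcases J.htot y' hy'z (fun h => hx'y ((h.trans hux).symm)) with hA | hB
  · obtain ⟨b, hb⟩ := J.hB
    have h1 : c s(y', b) = r' := J.hcross y' hA b hb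
    have h2 : c s(y', b) = q' := fully' b
      (fun hbe => J.hdisj y' hA (hbe ▸ hb)) (by rw [← hux]; exact (J.hBvu b hb).2)
    rw [h1] at h2
    exact hqr' h2.symm
  · obtain ⟨a, ha⟩ := J.hA
    have h1 : c s(a, y') = r' := J.hcross a ha y' hB
    have h2 : c s(y', a) = q' := fully' a
      (fun hae => J.hdisj y' (hae ▸ ha) hB) (by rw [← hux]; exact (J.hAvu a ha).2)
    rw [csymm c a y', h2] at h1
    exact hqr' h1


lemma connected_of_cut {W : Type*} (G : SimpleGraph W) (hne : Nonempty W)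
    (h : ∀ P : Set W, P.Nonempty → (∃ w, w ∉ P) → ∃ a b, a ∈ P ∧ b ∉ P ∧ G.Adj a b) :
    G.Connected := by
  rw [SimpleGraph.connected_iff]
  refine ⟨?_, hne⟩
  intro u w
  by_contra hr
  obtain ⟨a, b, ha, hb, hab⟩ := h {t | G.Reachable u t} ⟨u, SimpleGraph.Reachable.refl u⟩ ⟨w, hr⟩
  exact hb (Set.mem_setOf.mpr ((Set.mem_setOf.mp ha).trans hab.reachable))

end Stmt4Aux
/-- For `n ≥ 7`, every 3-coloring of `Kₙ` has a 2-connected subgraph on `n−1`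
vertices using at most two colors. -/
theorem stmt_4 (n : ℕ) (hn : 7 ≤ n) (c : Sym2 (Fin n) → Fin 3) :
    ∃ (i j : Fin 3) (S : Finset (Fin n)), S.card = n - 1 ∧
      KConn 2 ((twoColorGraph c i j).induce (↑S : Set (Fin n))) := by
  classical
  obtain ⟨k, v, hkv⟩ := Stmt4Aux.main_contra hn c
  refine ⟨k + 1, k + 2, Finset.univ.erase v, ?_, ?_, ?_⟩
  · rw [Finset.card_erase_of_mem (Finset.mem_univ v), Finset.card_univ, Fintype.card_fin]
  · have hc : Fintype.card (↑((Finset.univ.erase v : Finset (Fin n)) : Set (Fin n))) = n - 1 := by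
      simp [Finset.filter_ne']
    rw [hc]
    omega
  · intro s hs
    have hcardV' : Fintype.card (↑((Finset.univ.erase v : Finset (Fin n)) : Set (Fin n))) = n - 1 := by
      simp [Finset.filter_ne']
    have hξ : ∃ ξ : ↑((Finset.univ.erase v : Finset (Fin n)) : Set (Fin n)), ξ ∉ s := by
      by_contra hcon
      push_neg at hcon
      have hsub : (Finset.univ : Finset ↑((Finset.univ.erase v : Finset (Fin n)) : Set (Fin n))) ⊆ s :=
        fun a _ => hcon a
      have hle := Finset.card_le_card hsub
      rw [Finset.card_univ, hcardV'] at hle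
      omega
    obtain ⟨ξ, hξs⟩ := hξ
    have hneW : Nonempty ↑((↑s : Set ↑((Finset.univ.erase v : Finset (Fin n)) : Set (Fin n)))ᶜ) :=
      ⟨⟨ξ, by simpa using hξs⟩⟩
    apply Stmt4Aux.connected_of_cut _ hneW
    intro P hPne hPco
    by_contra hno
    push_neg at hno
    exfalso
    apply hkv
    have huu : ∃ uu : Fin n,
        (uu = v ∨ ∃ e : ↑((Finset.univ.erase v : Finset (Fin n)) : Set (Fin n)), e ∈ s ∧ (e : Fin n) = uu) ∧
        (∀ ζ : ↑((Finset.univ.erase v : Finset (Fin n)) : Set (Fin n)), ζ ∈ s → (ζ : Fin n) = uu) := by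
      rcases s.eq_empty_or_nonempty with he | ⟨e, he⟩
      · exact ⟨v, Or.inl rfl, by simp [he]⟩
      · refine ⟨(e : Fin n), Or.inr ⟨e, he, rfl⟩, ?_⟩
        intro ζ hζ
        have h1 : ζ = e := Finset.card_le_one.mp (by omega) ζ hζ e he
        rw [h1]
    obtain ⟨uu, huu1, huu2⟩ := huu
    have hvalv : ∀ w : ↑((↑s : Set ↑((Finset.univ.erase v : Finset (Fin n)) : Set (Fin n)))ᶜ),
        ((w : ↑((Finset.univ.erase v : Finset (Fin n)) : Set (Fin n))) : Fin n) ≠ v := by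
      intro w
      have hp := (w : ↑((Finset.univ.erase v : Finset (Fin n)) : Set (Fin n))).property
      rw [Finset.mem_coe, Finset.mem_erase] at hp
      exact hp.1
    have hvalu : ∀ w : ↑((↑s : Set ↑((Finset.univ.erase v : Finset (Fin n)) : Set (Fin n)))ᶜ),
        ((w : ↑((Finset.univ.erase v : Finset (Fin n)) : Set (Fin n))) : Fin n) ≠ uu := by
      intro w heq
      rcases huu1 with h | ⟨e, hes, hev⟩
      · exact hvalv w (heq.trans h)
      · have hwe : (w : ↑((Finset.univ.erase v : Finset (Fin n)) : Set (Fin n))) = e :=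
          Subtype.ext (heq.trans hev.symm)
        have hws : (w : ↑((Finset.univ.erase v : Finset (Fin n)) : Set (Fin n))) ∉ s := by
          have hws0 := w.property
          simp only [Set.mem_compl_iff, Finset.mem_coe] at hws0
          exact hws0
        exact hws (by rw [hwe]; exact hes)
    have hinj : ∀ w w' : ↑((↑s : Set ↑((Finset.univ.erase v : Finset (Fin n)) : Set (Fin n)))ᶜ),
        ((w : ↑((Finset.univ.erase v : Finset (Fin n)) : Set (Fin n))) : Fin n) =
        ((w' : ↑((Finset.univ.erase v : Finset (Fin n)) : Set (Fin n))) : Fin n) → w = w' :=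
      fun w w' h => Subtype.ext (Subtype.ext h)
    refine ⟨⟨uu,
      (fun w : ↑((↑s : Set ↑((Finset.univ.erase v : Finset (Fin n)) : Set (Fin n)))ᶜ) =>
        ((w : ↑((Finset.univ.erase v : Finset (Fin n)) : Set (Fin n))) : Fin n)) '' P,
      (fun w : ↑((↑s : Set ↑((Finset.univ.erase v : Finset (Fin n)) : Set (Fin n)))ᶜ) =>
        ((w : ↑((Finset.univ.erase v : Finset (Fin n)) : Set (Fin n))) : Fin n)) '' Pᶜ,
      hPne.image _, ?_, ?_, ?_, ?_, ?_, ?_⟩⟩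
    · obtain ⟨w, hw⟩ := hPco
      exact ⟨_, Set.mem_image_of_mem _ (Set.mem_compl hw)⟩
    · rintro a ⟨w, -, rfl⟩
      exact ⟨hvalv w, hvalu w⟩
    · rintro b ⟨w, -, rfl⟩
      exact ⟨hvalv w, hvalu w⟩
    · rintro t ⟨w, hwP, rfl⟩ ⟨w', hw'P, heq⟩
      exact hw'P (hinj w' w heq ▸ hwP)
    · intro t htv htu
      have htS : t ∈ ((Finset.univ.erase v : Finset (Fin n)) : Set (Fin n)) := by
        rw [Finset.mem_coe, Finset.mem_erase]
        exact ⟨htv, Finset.mem_univ t⟩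
      have hts : (⟨t, htS⟩ : ↑((Finset.univ.erase v : Finset (Fin n)) : Set (Fin n))) ∉ s :=
        fun hmem => htu (huu2 _ hmem)
      by_cases hwP : (⟨⟨t, htS⟩, by simpa using hts⟩ :
          ↑((↑s : Set ↑((Finset.univ.erase v : Finset (Fin n)) : Set (Fin n)))ᶜ)) ∈ P
      · exact Or.inl ⟨_, hwP, rfl⟩
      · exact Or.inr ⟨_, hwP, rfl⟩
    · rintro a ⟨wa, hwaP, rfl⟩ b ⟨wb, hwbP, rfl⟩
      have hne : ((wa : ↑((Finset.univ.erase v : Finset (Fin n)) : Set (Fin n))) : Fin n) ≠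
          ((wb : ↑((Finset.univ.erase v : Finset (Fin n)) : Set (Fin n))) : Fin n) :=
        fun h => hwbP (hinj wa wb h ▸ hwaP)
      have hnadj := hno wa wb hwaP hwbP
      have hnadj' : ¬ (twoColorGraph c (k + 1) (k + 2)).Adj
          ((wa : ↑((Finset.univ.erase v : Finset (Fin n)) : Set (Fin n))) : Fin n)
          ((wb : ↑((Finset.univ.erase v : Finset (Fin n)) : Set (Fin n))) : Fin n) := hnadj
      rw [twoColorGraph, SimpleGraph.fromRel_adj] at hnadj'
      push_neg at hnadj'
      have hcc := hnadj' hne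
      rw [Sym2.eq_swap (a := ((wb : ↑((Finset.univ.erase v : Finset (Fin n)) : Set (Fin n))) : Fin n))] at hcc
      exact Stmt4Aux.fin3_cases _ k hcc.1.1 hcc.1.2
end

section
/- For every n ≥ 7, every Gallai-coloring of K_n with 3 colors (i.e., a 3-edge-coloring with no rainbow triangle) contains a spanning 2-connected subgraph whose edges use at most two of the three colors. -/
open Finset SimpleGraph

lemma twoColor_adj {n : ℕ} (c : Sym2 (Fin n) → Fin 3) (i j : Fin 3) (x y : Fin n) :
    (twoColorGraph c i j).Adj x y ↔ x ≠ y ∧ (c s(x, y) = i ∨ c s(x, y) = j) := by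
  unfold twoColorGraph
  rw [SimpleGraph.fromRel_adj]
  constructor
  · rintro ⟨h, h' | h'⟩
    · exact ⟨h, h'⟩
    · rw [Sym2.eq_swap] at h'; exact ⟨h, h'⟩
  · rintro ⟨h, h'⟩; exact ⟨h, Or.inl h'⟩

lemma induce_adj' {V : Type*} (G : SimpleGraph V) (W : Set V) (x y : W) :
    (G.induce W).Adj x y ↔ G.Adj x y := Iff.rfl

lemma avoid3 {n : ℕ} (hn : 7 ≤ n) (a b d : Fin n) : ∃ x : Fin n, x ≠ a ∧ x ≠ b ∧ x ≠ d := by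
  by_contra h
  push_neg at h
  have hsub : (Finset.univ : Finset (Fin n)) ⊆ {a, b, d} := by
    intro x _
    simp only [Finset.mem_insert, Finset.mem_singleton]
    by_contra hx
    push_neg at hx
    exact hx.2.2 (h x hx.1 hx.2.1)
  have h1 : (Finset.univ : Finset (Fin n)).card ≤ ({a, b, d} : Finset (Fin n)).card :=
    Finset.card_le_card hsub
  have h2 : ({a, b, d} : Finset (Fin n)).card ≤ 3 := by
    apply le_trans (Finset.card_insert_le _ _)
    have := Finset.card_insert_le b ({d} : Finset (Fin n))
    simp at this ⊢
    omega
  simp [Finset.card_univ] at h1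
  omega

lemma conn_of_univ {V : Type*} (G : SimpleGraph V) (W : Set V) (u : V) (hu : u ∈ W)
    (h : ∀ x ∈ W, x ≠ u → G.Adj u x) : (G.induce W).Connected := by
  rw [SimpleGraph.connected_iff]
  refine ⟨?_, ⟨⟨u, hu⟩⟩⟩
  have key : ∀ z : W, (G.induce W).Reachable ⟨u, hu⟩ z := by
    rintro ⟨z, hz⟩
    by_cases hzu : z = u
    · subst hzu; exact Reachable.refl _
    · exact SimpleGraph.Adj.reachable (h z hz hzu)
  intro x y
  exact (key x).symm.trans (key y)

lemma conn_of_bip {V : Type*} (G : SimpleGraph V) (W A B : Set V)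
    (hW : ∀ x ∈ W, x ∈ A ∨ x ∈ B) (hadj : ∀ p ∈ A, ∀ q ∈ B, G.Adj p q)
    (a : V) (haA : a ∈ A) (haW : a ∈ W) (b : V) (hbB : b ∈ B) (hbW : b ∈ W) :
    (G.induce W).Connected := by
  rw [SimpleGraph.connected_iff]
  refine ⟨?_, ⟨⟨a, haW⟩⟩⟩
  have key : ∀ z : W, (G.induce W).Reachable ⟨b, hbW⟩ z := by
    rintro ⟨z, hz⟩
    rcases hW z hz with hzA | hzB
    · exact (SimpleGraph.Adj.reachable
        (show (G.induce W).Adj ⟨z, hz⟩ ⟨b, hbW⟩ from hadj z hzA b hbB)).symm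
    · exact ((SimpleGraph.Adj.reachable
        (show (G.induce W).Adj ⟨a, haW⟩ ⟨b, hbW⟩ from hadj a haA b hbB)).symm.trans
        (SimpleGraph.Adj.reachable
        (show (G.induce W).Adj ⟨a, haW⟩ ⟨z, hz⟩ from hadj a haA z hzB)))
  intro x y
  exact (key x).symm.trans (key y)

lemma extract {V : Type*} (G : SimpleGraph V) (W : Set V) (hW : W.Nonempty)
    (h : ¬(G.induce W).Connected) :
    ∃ A B : Set V, A.Nonempty ∧ B.Nonempty ∧ (∀ x, x ∈ W ↔ (x ∈ A ∨ x ∈ B)) ∧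
      (∀ x ∈ A, x ∉ B) ∧ ∀ a ∈ A, ∀ b ∈ B, ¬G.Adj a b := by
  classical
  obtain ⟨w0, hw0⟩ := hW
  set A : Set V := {x | ∃ hx : x ∈ W, (G.induce W).Reachable ⟨w0, hw0⟩ ⟨x, hx⟩} with hA
  set B : Set V := W \ A with hB
  have hAW : A ⊆ W := fun x hx => hx.1
  refine ⟨A, B, ⟨w0, ⟨hw0, Reachable.refl _⟩⟩, ?_, ?_, ?_, ?_⟩
  · by_contra hBe
    rw [Set.not_nonempty_iff_eq_empty] at hBe
    have hWA : ∀ x ∈ W, x ∈ A := by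
      intro x hx
      by_contra hxA
      have : x ∈ B := ⟨hx, hxA⟩
      rw [hBe] at this
      exact this
    apply h
    rw [SimpleGraph.connected_iff]
    refine ⟨?_, ⟨⟨w0, hw0⟩⟩⟩
    intro x y
    obtain ⟨hx', hrx⟩ := hWA x.1 x.2
    obtain ⟨hy', hry⟩ := hWA y.1 y.2
    have ex : (⟨x.1, hx'⟩ : W) = x := Subtype.ext rfl
    have ey : (⟨y.1, hy'⟩ : W) = y := Subtype.ext rfl
    rw [ex] at hrx; rw [ey] at hry
    exact hrx.symm.trans hry
  · intro x
    constructor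
    · intro hx
      by_cases hxA : x ∈ A
      · exact Or.inl hxA
      · exact Or.inr ⟨hx, hxA⟩
    · rintro (hx | hx)
      · exact hAW hx
      · exact hx.1
  · exact fun x hx hxB => hxB.2 hx
  · intro a ha b hb hadj
    apply hb.2
    obtain ⟨haW', hra⟩ := ha
    have : (G.induce W).Adj ⟨a, haW'⟩ ⟨b, hb.1⟩ := hadj
    exact ⟨hb.1, hra.trans this.reachable⟩



lemma twoPartitions {n : ℕ} (c : Sym2 (Fin n) → Fin 3) (A1 B1 A2 B2 : Set (Fin n))
    (x y : Fin 3) (hxy : x ≠ y)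
    (hsame : ∀ z, (z ∈ A1 ∨ z ∈ B1) ↔ (z ∈ A2 ∨ z ∈ B2))
    (h1d : ∀ z ∈ A1, z ∉ B1) (h1a : A1.Nonempty) (h1b : B1.Nonempty)
    (h2d : ∀ z ∈ A2, z ∉ B2) (h2a : A2.Nonempty) (h2b : B2.Nonempty)
    (hc1 : ∀ a ∈ A1, ∀ b ∈ B1, c s(a, b) = x)
    (hc2 : ∀ a ∈ A2, ∀ b ∈ B2, c s(a, b) = y) : False := by
  have key : ∀ a, a ∈ A1 → a ∈ A2 → ∀ b, b ∈ B1 → b ∈ B2 → False := by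
    intro a ha1 ha2 b hb1 hb2
    exact hxy (by rw [← hc1 a ha1 b hb1, hc2 a ha2 b hb2])
  have key2 : ∀ a, a ∈ A1 → a ∈ B2 → ∀ b, b ∈ B1 → b ∈ A2 → False := by
    intro a ha1 ha2 b hb1 hb2
    apply hxy
    rw [← hc1 a ha1 b hb1]
    have : c s(b, a) = y := hc2 b hb2 a ha2
    rw [Sym2.eq_swap] at this
    rw [this]
  obtain ⟨a0, ha0⟩ := h1a
  obtain ⟨b0, hb0⟩ := h1b
  obtain ⟨p0, hp0⟩ := h2a
  obtain ⟨q0, hq0⟩ := h2b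
  have ha0' := (hsame a0).mp (Or.inl ha0)
  have hb0' := (hsame b0).mp (Or.inr hb0)
  rcases ha0' with haA | haB
  · rcases hb0' with hbA | hbB
    · have hq0' := (hsame q0).mpr (Or.inr hq0)
      rcases hq0' with hqA | hqB
      · exact key2 q0 hqA hq0 b0 hb0 hbA
      · exact key a0 ha0 haA q0 hqB hq0
    · exact key a0 ha0 haA b0 hb0 hbB
  · rcases hb0' with hbA | hbB
    · exact key2 a0 ha0 haB b0 hb0 hbA
    · have hp0' := (hsame p0).mpr (Or.inl hp0)
      rcases hp0' with hpA | hpB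
      · exact key p0 hpA hp0 b0 hb0 hbB
      · exact key2 a0 ha0 haB p0 hpB hp0

lemma twoUniv {n : ℕ} (G : SimpleGraph (Fin n)) (hn : 3 ≤ n) (u w : Fin n) (huw : u ≠ w)
    (hu : ∀ x, x ≠ u → G.Adj u x) (hw : ∀ x, x ≠ w → G.Adj w x) : KConn 2 G := by
  constructor
  · simp [Fintype.card_fin]; omega
  · intro s hs
    by_cases hus : u ∈ s
    · have hws : w ∉ s := by
        intro hws
        have : s.card ≤ 1 := by omega
        rw [Finset.card_le_one] at this
        exact huw (this u hus w hws)
      apply conn_of_univ _ _ w (by simpa using hws)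
      intro x _ hxw
      exact hw x hxw
    · apply conn_of_univ _ _ u (by simpa using hus)
      intro x _ hxu
      exact hu x hxu

lemma kconn_univ_plus {n : ℕ} (G : SimpleGraph (Fin n)) (hn : 3 ≤ n) (v : Fin n)
    (hu : ∀ x, x ≠ v → G.Adj v x)
    (hc : (G.induce ({v}ᶜ : Set (Fin n))).Connected) : KConn 2 G := by
  constructor
  · simp [Fintype.card_fin]; omega
  · intro s hs
    by_cases hvs : v ∈ s
    · have hseq : s = {v} := by
        apply Finset.eq_singleton_iff_unique_mem.mpr
        refine ⟨hvs, ?_⟩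
        intro x hx
        have : s.card ≤ 1 := by omega
        rw [Finset.card_le_one] at this
        exact this x hx v hvs
      have : ((↑s : Set (Fin n))ᶜ) = ({v}ᶜ : Set (Fin n)) := by
        rw [hseq]; simp
      rw [this]
      exact hc
    · apply conn_of_univ _ _ v (by simpa using hvs)
      intro x _ hxv
      exact hu x hxv

lemma core {n : ℕ} (hn : 7 ≤ n) (c : Sym2 (Fin n) → Fin 3) (hg : GallaiColoring c)
    (a b : Fin 3) (hab : a ≠ b) (p q r : Fin n) (hpq : p ≠ q) (hpr : p ≠ r) (hqr : q ≠ r)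
    (H1 : ∀ x, x ≠ p → x ≠ q → c s(q, x) = a)
    (H2 : ∀ x, x ≠ r → x ≠ p → c s(p, x) = b)
    (hno : ¬KConn 2 (twoColorGraph c a b)) : False := by
  have e1 : c s(p, q) = b := H2 q hqr hpq.symm
  have e2 : c s(q, r) = a := H1 r hpr.symm hqr.symm
  by_cases h : c s(p, r) = a ∨ c s(p, r) = b
  · apply hno
    apply twoUniv _ (by omega) p q hpq
    · intro x hxp
      rw [twoColor_adj]
      refine ⟨hxp.symm, ?_⟩
      by_cases hxr : x = r
      · subst hxr; exact h
      · by_cases hxq : x = q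
        · subst hxq; exact Or.inr e1
        · exact Or.inr (H2 x hxr hxp)
    · intro x hxq
      rw [twoColor_adj]
      refine ⟨hxq.symm, ?_⟩
      by_cases hxp : x = p
      · subst hxp
        rw [Sym2.eq_swap]
        exact Or.inr e1
      · exact Or.inl (H1 x hxp hxq)
  · push_neg at h
    apply hg
    refine ⟨q, p, r, hpq.symm, hpr, hqr, ?_, ?_, ?_⟩
    · rw [Sym2.eq_swap, e1]
      exact fun he => h.2 he.symm
    · rw [e2]
      exact h.1
    · rw [Sym2.eq_swap, e1, e2]
      exact Ne.symm hab

lemma getCut {n : ℕ} (hn : 7 ≤ n) (c : Sym2 (Fin n) → Fin 3) (i j k : Fin 3)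
    (hk : ∀ x : Fin 3, x ≠ i → x ≠ j → x = k)
    (hno : ¬KConn 2 (twoColorGraph c i j)) :
    ∃ (s : Finset (Fin n)) (A B : Set (Fin n)), s.card ≤ 1 ∧ A.Nonempty ∧ B.Nonempty ∧
      (∀ x, x ∉ s ↔ (x ∈ A ∨ x ∈ B)) ∧ (∀ x ∈ A, x ∉ B) ∧
      ∀ a ∈ A, ∀ b ∈ B, c s(a, b) = k := by
  unfold KConn at hno
  push_neg at hno
  obtain ⟨s, hs, hdis⟩ := hno (by simp [Fintype.card_fin]; omega)
  have hWne : ((↑s : Set (Fin n))ᶜ).Nonempty := by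
    by_contra hW
    rw [Set.not_nonempty_iff_eq_empty] at hW
    have : ∀ y : Fin n, y ∈ s := by
      intro y
      by_contra hy
      have : y ∈ ((↑s : Set (Fin n))ᶜ) := by simpa using hy
      rw [hW] at this
      exact this
    have : (Finset.univ : Finset (Fin n)) ⊆ s := fun y _ => this y
    have := Finset.card_le_card this
    simp [Finset.card_univ] at this
    omega
  obtain ⟨A, B, hA, hB, hmem, hdisj, hcross⟩ := extract _ _ hWne hdis
  refine ⟨s, A, B, by omega, hA, hB, ?_, hdisj, ?_⟩
  · intro x
    rw [← hmem x]
    simp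
  · intro a ha b hb
    have hnadj := hcross a ha b hb
    rw [twoColor_adj] at hnadj
    push_neg at hnadj
    have hab : a ≠ b := fun he => (hdisj a ha) (he ▸ hb)
    obtain ⟨h1, h2⟩ := hnadj hab
    exact hk _ h1 h2

lemma caseA2 {n : ℕ} (hn : 7 ≤ n) (c : Sym2 (Fin n) → Fin 3) (k i j : Fin 3)
    (hij : i ≠ j)
    (hx1 : ∀ x : Fin 3, x ≠ k → x ≠ i → x = j) (hx2 : ∀ x : Fin 3, x ≠ k → x ≠ j → x = i)
    (h1 : ¬KConn 2 (twoColorGraph c k i)) (h2 : ¬KConn 2 (twoColorGraph c k j))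
    (v : Fin n) (hv : ∀ x, x ≠ v → c s(v, x) = k) : False := by
  have hWne : (({v}ᶜ : Set (Fin n))).Nonempty := by
    obtain ⟨x, hx1', _, _⟩ := avoid3 hn v v v
    exact ⟨x, by simpa using hx1'⟩
  have huniv : ∀ (i' : Fin 3), ∀ x : Fin n, x ≠ v → (twoColorGraph c k i').Adj v x := by
    intro i' x hxv
    rw [twoColor_adj]
    exact ⟨hxv.symm, Or.inl (hv x hxv)⟩
  by_cases hc1 : ((twoColorGraph c k i).induce ({v}ᶜ : Set (Fin n))).Connected
  · exact h1 (kconn_univ_plus _ (by omega) v (fun x hx => huniv i x hx) hc1)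
  · obtain ⟨A1, B1, h1a, h1b, h1m, h1d, h1c⟩ := extract _ _ hWne hc1
    have hc1' : ∀ a ∈ A1, ∀ b ∈ B1, c s(a, b) = j := by
      intro a ha b hb
      have hnadj := h1c a ha b hb
      rw [twoColor_adj] at hnadj
      push_neg at hnadj
      have hab : a ≠ b := fun he => (h1d a ha) (he ▸ hb)
      obtain ⟨g1, g2⟩ := hnadj hab
      exact hx1 _ g1 g2
    by_cases hc2 : ((twoColorGraph c k j).induce ({v}ᶜ : Set (Fin n))).Connected
    · exact h2 (kconn_univ_plus _ (by omega) v (fun x hx => huniv j x hx) hc2)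
    · obtain ⟨A2, B2, h2a, h2b, h2m, h2d, h2c⟩ := extract _ _ hWne hc2
      have hc2' : ∀ a ∈ A2, ∀ b ∈ B2, c s(a, b) = i := by
        intro a ha b hb
        have hnadj := h2c a ha b hb
        rw [twoColor_adj] at hnadj
        push_neg at hnadj
        have hab : a ≠ b := fun he => (h2d a ha) (he ▸ hb)
        obtain ⟨g1, g2⟩ := hnadj hab
        exact hx2 _ g1 g2
      exact twoPartitions c A1 B1 A2 B2 j i hij.symm
        (fun z => by rw [← h1m z, ← h2m z]) h1d h1a h1b h2d h2a h2b hc1' hc2'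

lemma caseA {n : ℕ} (hn : 7 ≤ n) (c : Sym2 (Fin n) → Fin 3) (k i j : Fin 3)
    (hij : i ≠ j)
    (hx1 : ∀ x : Fin 3, x ≠ k → x ≠ i → x = j) (hx2 : ∀ x : Fin 3, x ≠ k → x ≠ j → x = i)
    (h1 : ¬KConn 2 (twoColorGraph c k i)) (h2 : ¬KConn 2 (twoColorGraph c k j))
    (A B : Set (Fin n)) (hA : A.Nonempty) (hB : B.Nonempty)
    (hmem : ∀ x, x ∈ A ∨ x ∈ B) (hdisj : ∀ x ∈ A, x ∉ B)
    (hcross : ∀ a ∈ A, ∀ b ∈ B, c s(a, b) = k) : False := by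
  obtain ⟨a0, ha0⟩ := hA
  obtain ⟨b0, hb0⟩ := hB
  by_cases hA2 : ∀ a ∈ A, a = a0
  · -- A = {a0}, star at a0
    apply caseA2 hn c k i j hij hx1 hx2 h1 h2 a0
    intro x hx
    have hxB : x ∈ B := by
      rcases hmem x with h | h
      · exact absurd (hA2 x h) hx
      · exact h
    exact hcross a0 ha0 x hxB
  · push_neg at hA2
    obtain ⟨a1, ha1, ha1ne⟩ := hA2
    by_cases hB2 : ∀ b ∈ B, b = b0
    · apply caseA2 hn c k i j hij hx1 hx2 h1 h2 b0
      intro x hx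
      have hxA : x ∈ A := by
        rcases hmem x with h | h
        · exact h
        · exact absurd (hB2 x h) hx
      have := hcross x hxA b0 hb0
      rwa [Sym2.eq_swap] at this
    · push_neg at hB2
      obtain ⟨b1, hb1, hb1ne⟩ := hB2
      apply h1
      constructor
      · simp [Fintype.card_fin]; omega
      · intro s hs
        have hfindA : ∃ a ∈ A, a ∉ s := by
          by_contra hf
          push_neg at hf
          have h1' := hf a0 ha0
          have h2' := hf a1 ha1
          have : ({a1, a0} : Finset (Fin n)) ⊆ s := by
            intro z hz
            simp at hz
            rcases hz with rfl | rfl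
            · exact h2'
            · exact h1'
          have := Finset.card_le_card this
          rw [Finset.card_pair ha1ne] at this
          omega
        have hfindB : ∃ b ∈ B, b ∉ s := by
          by_contra hf
          push_neg at hf
          have h1' := hf b0 hb0
          have h2' := hf b1 hb1
          have : ({b1, b0} : Finset (Fin n)) ⊆ s := by
            intro z hz
            simp at hz
            rcases hz with rfl | rfl
            · exact h2'
            · exact h1'
          have := Finset.card_le_card this
          rw [Finset.card_pair hb1ne] at this
          omega
        obtain ⟨a, haA, haS⟩ := hfindA
        obtain ⟨b, hbB, hbS⟩ := hfindB
        apply conn_of_bip _ _ A B (fun x _ => hmem x) ?_ a haA (by simpa using haS)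
          b hbB (by simpa using hbS)
        intro p hp q hq
        rw [twoColor_adj]
        refine ⟨fun he => (hdisj p hp) (he ▸ hq), Or.inl (hcross p hp q hq)⟩

lemma pairCut {n : ℕ} (c : Sym2 (Fin n) → Fin 3) (k l : Fin 3) (hkl : k ≠ l)
    (vk vl : Fin n)
    (Ak Bk Al Bl : Set (Fin n))
    (hmk : ∀ z, z ≠ vk ↔ (z ∈ Ak ∨ z ∈ Bk)) (hdk : ∀ z ∈ Ak, z ∉ Bk)
    (hak : Ak.Nonempty) (hbk : Bk.Nonempty)
    (hml : ∀ z, z ≠ vl ↔ (z ∈ Al ∨ z ∈ Bl)) (hdl : ∀ z ∈ Al, z ∉ Bl)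
    (hal : Al.Nonempty) (hbl : Bl.Nonempty)
    (hck : ∀ a ∈ Ak, ∀ b ∈ Bk, c s(a, b) = k) (hcl : ∀ a ∈ Al, ∀ b ∈ Bl, c s(a, b) = l) :
    (Ak = {vl} ∨ Bk = {vl}) ∨ (Al = {vk} ∨ Bl = {vk}) := by
  have key : ∀ p q, p ∈ Ak → q ∈ Bk → p ∈ Al → q ∈ Bl → False := by
    intro p q h1 h2 h3 h4
    exact hkl (by rw [← hck p h1 q h2, hcl p h3 q h4])
  have key2 : ∀ p q, p ∈ Ak → q ∈ Bk → p ∈ Bl → q ∈ Al → False := by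
    intro p q h1 h2 h3 h4
    apply hkl
    rw [← hck p h1 q h2]
    have := hcl q h4 p h3
    rw [Sym2.eq_swap] at this
    rw [this]
  have C1 : (∀ p ∈ Ak, p ∉ Al) ∨ (∀ q ∈ Bk, q ∉ Bl) := by
    by_contra hC
    push_neg at hC
    obtain ⟨⟨p, hp1, hp2⟩, ⟨q, hq1, hq2⟩⟩ := hC
    exact key p q hp1 hq1 hp2 hq2
  have C2 : (∀ p ∈ Ak, p ∉ Bl) ∨ (∀ q ∈ Bk, q ∉ Al) := by
    by_contra hC
    push_neg at hC
    obtain ⟨⟨p, hp1, hp2⟩, ⟨q, hq1, hq2⟩⟩ := hC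
    exact key2 p q hp1 hq1 hp2 hq2
  have sing : ∀ (X : Set (Fin n)) (w : Fin n), X.Nonempty → (∀ z ∈ X, z = w) → X = {w} := by
    intro X w ⟨z0, hz0⟩ hX
    ext z
    simp only [Set.mem_singleton_iff]
    constructor
    · exact hX z
    · intro hz; subst hz; have := hX z0 hz0; rwa [this] at hz0
  rcases C1 with c1 | c1 <;> rcases C2 with c2 | c2
  · -- Ak ∩ Al = ∅, Ak ∩ Bl = ∅ → Ak = {vl}
    left; left
    apply sing _ _ hak
    intro z hz
    by_contra hzvl
    rcases (hml z).mp hzvl with h | h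
    · exact c1 z hz h
    · exact c2 z hz h
  · -- Ak ∩ Al = ∅, Bk ∩ Al = ∅ → Al = {vk}
    right; left
    apply sing _ _ hal
    intro z hz
    by_contra hzvk
    rcases (hmk z).mp hzvk with h | h
    · exact c1 z h hz
    · exact c2 z h hz
  · -- Bk ∩ Bl = ∅, Ak ∩ Bl = ∅ → Bl = {vk}
    right; right
    apply sing _ _ hbl
    intro z hz
    by_contra hzvk
    rcases (hmk z).mp hzvk with h | h
    · exact c2 z h hz
    · exact c1 z h hz
  · -- Bk ∩ Bl = ∅, Bk ∩ Al = ∅ → Bk = {vl}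
    left; right
    apply sing _ _ hbk
    intro z hz
    by_contra hzvl
    rcases (hml z).mp hzvl with h | h
    · exact c2 z hz h
    · exact c1 z hz h

lemma starOf {n : ℕ} (c : Sym2 (Fin n) → Fin 3) (k : Fin 3) (vk vl : Fin n)
    (Ak Bk : Set (Fin n))
    (hmk : ∀ z, z ≠ vk ↔ (z ∈ Ak ∨ z ∈ Bk))
    (hck : ∀ a ∈ Ak, ∀ b ∈ Bk, c s(a, b) = k)
    (hvl : vk ≠ vl)
    (hS : Ak = {vl} ∨ Bk = {vl}) :
    ∀ x, x ≠ vk → x ≠ vl → c s(vl, x) = k := by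
  intro x hxvk hxvl
  rcases hS with hS | hS
  · have hxB : x ∈ Bk := by
      rcases (hmk x).mp hxvk with h | h
      · rw [hS] at h; exact absurd h hxvl
      · exact h
    have hvlA : vl ∈ Ak := by rw [hS]; rfl
    exact hck vl hvlA x hxB
  · have hxA : x ∈ Ak := by
      rcases (hmk x).mp hxvk with h | h
      · exact h
      · rw [hS] at h; exact absurd h hxvl
    have hvlB : vl ∈ Bk := by rw [hS]; rfl
    have := hck x hxA vl hvlB
    rwa [Sym2.eq_swap] at this

lemma excl {n : ℕ} (hn : 7 ≤ n) (vk vl vl' : Fin n) (hll : vl ≠ vl')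
    (Ak Bk : Set (Fin n)) (hmk : ∀ z, z ≠ vk ↔ (z ∈ Ak ∨ z ∈ Bk))
    (H1 : Ak = {vl} ∨ Bk = {vl}) (H2 : Ak = {vl'} ∨ Bk = {vl'}) : False := by
  obtain ⟨x, hx1, hx2, hx3⟩ := avoid3 hn vk vl vl'
  have hx : x ∈ Ak ∨ x ∈ Bk := (hmk x).mp hx1
  rcases H1 with h1 | h1 <;> rcases H2 with h2 | h2
  · rw [h1] at h2; exact hll (Set.singleton_eq_singleton_iff.mp h2)
  · rcases hx with h | h
    · rw [h1] at h; exact hx2 h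
    · rw [h2] at h; exact hx3 h
  · rcases hx with h | h
    · rw [h2] at h; exact hx3 h
    · rw [h1] at h; exact hx2 h
  · rw [h1] at h2; exact hll (Set.singleton_eq_singleton_iff.mp h2)

/-- For `n ≥ 7`, every Gallai-3-coloring of `Kₙ` has a spanning 2-connected
subgraph using at most two colors. -/
theorem stmt_5 (n : ℕ) (hn : 7 ≤ n) (c : Sym2 (Fin n) → Fin 3)
    (hg : GallaiColoring c) :
    ∃ i j : Fin 3, KConn 2 (twoColorGraph c i j) := by
  by_contra hcon
  push_neg at hcon
  obtain ⟨s0, A0, B0, hs0, hA0, hB0, hm0, hd0, hc0⟩ :=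
    getCut hn c 1 2 0 (by decide) (hcon 1 2)
  obtain ⟨s1, A1, B1, hs1, hA1, hB1, hm1, hd1, hc1⟩ :=
    getCut hn c 0 2 1 (by decide) (hcon 0 2)
  obtain ⟨s2, A2, B2, hs2, hA2, hB2, hm2, hd2, hc2⟩ :=
    getCut hn c 0 1 2 (by decide) (hcon 0 1)
  rcases Finset.eq_empty_or_nonempty s0 with he0 | ⟨v0, hv0⟩
  · exact caseA hn c 0 1 2 (by decide) (by decide) (by decide) (hcon 0 1) (hcon 0 2)
      A0 B0 hA0 hB0 (fun x => (hm0 x).mp (by simp [he0])) hd0 hc0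
  rcases Finset.eq_empty_or_nonempty s1 with he1 | ⟨v1, hv1⟩
  · exact caseA hn c 1 0 2 (by decide) (by decide) (by decide) (hcon 1 0) (hcon 1 2)
      A1 B1 hA1 hB1 (fun x => (hm1 x).mp (by simp [he1])) hd1 hc1
  rcases Finset.eq_empty_or_nonempty s2 with he2 | ⟨v2, hv2⟩
  · exact caseA hn c 2 0 1 (by decide) (by decide) (by decide) (hcon 2 0) (hcon 2 1)
      A2 B2 hA2 hB2 (fun x => (hm2 x).mp (by simp [he2])) hd2 hc2
  have hs0e : s0 = {v0} :=
    Finset.eq_singleton_iff_unique_mem.mpr ⟨hv0, fun x hx => Finset.card_le_one.mp hs0 x hx v0 hv0⟩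
  have hs1e : s1 = {v1} :=
    Finset.eq_singleton_iff_unique_mem.mpr ⟨hv1, fun x hx => Finset.card_le_one.mp hs1 x hx v1 hv1⟩
  have hs2e : s2 = {v2} :=
    Finset.eq_singleton_iff_unique_mem.mpr ⟨hv2, fun x hx => Finset.card_le_one.mp hs2 x hx v2 hv2⟩
  have hm0' : ∀ z, z ≠ v0 ↔ (z ∈ A0 ∨ z ∈ B0) := by
    intro z; rw [← hm0 z, hs0e]; simp
  have hm1' : ∀ z, z ≠ v1 ↔ (z ∈ A1 ∨ z ∈ B1) := by
    intro z; rw [← hm1 z, hs1e]; simp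
  have hm2' : ∀ z, z ≠ v2 ↔ (z ∈ A2 ∨ z ∈ B2) := by
    intro z; rw [← hm2 z, hs2e]; simp
  have d01 : v0 ≠ v1 := by
    intro h
    exact twoPartitions c A0 B0 A1 B1 0 1 (by decide)
      (fun z => ((hm0' z).symm.trans (by rw [h]; exact hm1' z)))
      hd0 hA0 hB0 hd1 hA1 hB1 hc0 hc1
  have d02 : v0 ≠ v2 := by
    intro h
    exact twoPartitions c A0 B0 A2 B2 0 2 (by decide)
      (fun z => ((hm0' z).symm.trans (by rw [h]; exact hm2' z)))
      hd0 hA0 hB0 hd2 hA2 hB2 hc0 hc2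
  have d12 : v1 ≠ v2 := by
    intro h
    exact twoPartitions c A1 B1 A2 B2 1 2 (by decide)
      (fun z => ((hm1' z).symm.trans (by rw [h]; exact hm2' z)))
      hd1 hA1 hB1 hd2 hA2 hB2 hc1 hc2
  have pc01 := pairCut c 0 1 (by decide) v0 v1 A0 B0 A1 B1 hm0' hd0 hA0 hB0 hm1' hd1 hA1 hB1 hc0 hc1
  have pc02 := pairCut c 0 2 (by decide) v0 v2 A0 B0 A2 B2 hm0' hd0 hA0 hB0 hm2' hd2 hA2 hB2 hc0 hc2
  have pc12 := pairCut c 1 2 (by decide) v1 v2 A1 B1 A2 B2 hm1' hd1 hA1 hB1 hm2' hd2 hA2 hB2 hc1 hc2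
  rcases pc01 with S01 | S10
  · rcases pc02 with S02 | S20
    · exact excl hn v0 v1 v2 d12 A0 B0 hm0' S01 S02
    · exact core hn c hg 0 2 (by decide) v0 v1 v2 d01 d02 d12
        (starOf c 0 v0 v1 A0 B0 hm0' hc0 d01 S01)
        (starOf c 2 v2 v0 A2 B2 hm2' hc2 d02.symm S20)
        (hcon 0 2)
  · rcases pc12 with S12 | S21
    · exact excl hn v1 v0 v2 d02 A1 B1 hm1' S10 S12
    · exact core hn c hg 1 2 (by decide) v1 v0 v2 d01.symm d12 d02
        (starOf c 1 v1 v0 A1 B1 hm1' hc1 d01.symm S10)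
        (starOf c 2 v2 v1 A2 B2 hm2' hc2 d12.symm S21)
        (hcon 1 2)
end

section
/- For every n ≥ 7, every Gallai-coloring of K_n with 3 colors contains a 3-connected subgraph on at least n−1 vertices whose edges use at most two of the three colors. -/
open Finset SimpleGraph

namespace Stmt6

variable {n : ℕ} (c : Sym2 (Fin n) → Fin 3)

/-- Reachability inside the finset `A`, avoiding color `k`. -/
def RW (k : Fin 3) (A : Finset (Fin n)) : Fin n → Fin n → Prop :=
  Relation.ReflTransGen (fun u v => u ∈ A ∧ v ∈ A ∧ u ≠ v ∧ c s(u, v) ≠ k)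

variable {c}

lemma RW.symm {k : Fin 3} {A : Finset (Fin n)} {a b : Fin n} (h : RW c k A a b) :
    RW c k A b a := by
  induction h with
  | refl => exact Relation.ReflTransGen.refl
  | tail _ h2 ih =>
      refine Relation.ReflTransGen.trans (Relation.ReflTransGen.single ?_) ih
      exact ⟨h2.2.1, h2.1, Ne.symm h2.2.2.1, by rw [Sym2.eq_swap]; exact h2.2.2.2⟩

lemma RW.mono {k : Fin 3} {A B : Finset (Fin n)} (hAB : A ⊆ B) {a b : Fin n}
    (h : RW c k A a b) : RW c k B a b := by
  induction h with
  | refl => exact Relation.ReflTransGen.refl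
  | tail _ h2 ih =>
      exact ih.tail ⟨hAB h2.1, hAB h2.2.1, h2.2.2⟩

lemma RW.single {k : Fin 3} {A : Finset (Fin n)} {a b : Fin n} (ha : a ∈ A) (hb : b ∈ A)
    (hab : a ≠ b) (hc : c s(a, b) ≠ k) : RW c k A a b :=
  Relation.ReflTransGen.single ⟨ha, hb, hab, hc⟩

lemma fin3_cases {i j k x : Fin 3} (hij : i ≠ j) (hki : k ≠ i) (hkj : k ≠ j) :
    x ≠ k ↔ x = i ∨ x = j := by revert hij hki hkj; revert i j k x; decide

/-- Transfer: a uniform `RW`-connectivity statement gives `KConn 3` of the induced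
two-colored graph. -/
lemma kconn_transfer {k i j : Fin 3} (hij : i ≠ j) (hki : k ≠ i) (hkj : k ≠ j)
    {S : Finset (Fin n)} (h6 : 6 ≤ S.card)
    (H : ∀ X : Finset (Fin n), X.card ≤ 2 → ∀ a ∈ S \ X, ∀ b ∈ S \ X, RW c k (S \ X) a b) :
    KConn 3 ((twoColorGraph c i j).induce (↑S : Set (Fin n))) := by
  have hcard : Fintype.card (↑S : Set (Fin n)) = S.card := by simp
  constructor
  · omega
  intro s hs
  set X : Finset (Fin n) := s.image (fun x => (x.1 : Fin n)) with hX
  have hXcard : X.card ≤ 2 := le_trans Finset.card_image_le (by omega)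
  have hmem : ∀ (a : Fin n) (haS : a ∈ S),
      (⟨a, haS⟩ : (↑S : Set (Fin n))) ∈ ((↑s : Set (↑S : Set (Fin n)))ᶜ) ↔ a ∈ S \ X := by
    intro a haS
    simp only [Set.mem_compl_iff, Finset.mem_coe, Finset.mem_sdiff, hX, Finset.mem_image]
    constructor
    · intro h
      refine ⟨haS, ?_⟩
      rintro ⟨⟨b, hbS⟩, hbs, rfl⟩
      exact h hbs
    · rintro ⟨-, h⟩ hmem
      exact h ⟨⟨a, haS⟩, hmem, rfl⟩
  -- embed elements of S \ X as vertices
  have emb : ∀ a ∈ S \ X, ((↑s : Set (↑S : Set (Fin n)))ᶜ : Set (↑S : Set (Fin n))) := by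
    intro a ha
    exact ⟨⟨a, (Finset.mem_sdiff.1 ha).1⟩, ((hmem a (Finset.mem_sdiff.1 ha).1).2 ha)⟩
  have hadj : ∀ (x y : ((↑s : Set (↑S : Set (Fin n)))ᶜ : Set (↑S : Set (Fin n)))),
      x.1.1 ≠ y.1.1 → c s(x.1.1, y.1.1) ≠ k →
      (((twoColorGraph c i j).induce (↑S : Set (Fin n))).induce
        ((↑s : Set (↑S : Set (Fin n)))ᶜ)).Adj x y := by
    intro x y hne hc
    show (twoColorGraph c i j).Adj x.1.1 y.1.1
    rw [twoColorGraph, SimpleGraph.fromRel_adj]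
    refine ⟨hne, Or.inl ?_⟩
    exact (fin3_cases hij hki hkj).1 hc
  have hSXcard : 4 ≤ (S \ X).card := by
    have h1 := Finset.le_card_sdiff X S
    omega
  rw [SimpleGraph.connected_iff]
  constructor
  · -- Preconnected
    intro x y
    have hx : x.1.1 ∈ S \ X := (hmem x.1.1 x.1.2).1 x.2
    have hy : y.1.1 ∈ S \ X := (hmem y.1.1 y.1.2).1 y.2
    have path := H X hXcard _ hx _ hy
    have key : ∀ b, RW c k (S \ X) x.1.1 b → ∀ hb : b ∈ S \ X,
        (((twoColorGraph c i j).induce (↑S : Set (Fin n))).induce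
          ((↑s : Set (↑S : Set (Fin n)))ᶜ)).Reachable x
          ⟨⟨b, (Finset.mem_sdiff.1 hb).1⟩, (hmem b (Finset.mem_sdiff.1 hb).1).2 hb⟩ := by
      intro b hpath
      induction hpath with
      | refl => intro hb; exact SimpleGraph.Reachable.refl _
      | tail h1 h2 ih =>
          intro hb
          have hmid := ih h2.1
          refine hmid.trans (SimpleGraph.Adj.reachable ?_)
          exact hadj _ _ h2.2.2.1 h2.2.2.2
    have hkey := key y.1.1 path hy
    have heq : (⟨⟨y.1.1, (Finset.mem_sdiff.1 hy).1⟩,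
        (hmem y.1.1 (Finset.mem_sdiff.1 hy).1).2 hy⟩ :
        ((↑s : Set (↑S : Set (Fin n)))ᶜ : Set (↑S : Set (Fin n)))) = y :=
      Subtype.ext (Subtype.ext rfl)
    rwa [heq] at hkey
  · -- Nonempty
    obtain ⟨a, ha⟩ := Finset.card_pos.1 (by omega : 0 < (S \ X).card)
    exact ⟨⟨⟨a, (Finset.mem_sdiff.1 ha).1⟩, (hmem a (Finset.mem_sdiff.1 ha).1).2 ha⟩⟩

def KR (c : Sym2 (Fin n) → Fin 3) (k : Fin 3) (W : Finset (Fin n)) :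
    Fin n → Fin n → Prop :=
  Relation.ReflTransGen (fun u v => u ∈ W ∧ v ∈ W ∧ u ≠ v ∧ c s(u, v) = k)

lemma KR.symm {k : Fin 3} {W : Finset (Fin n)} {a b : Fin n} (h : KR c k W a b) :
    KR c k W b a := by
  induction h with
  | refl => exact Relation.ReflTransGen.refl
  | tail _ h2 ih =>
      refine Relation.ReflTransGen.trans (Relation.ReflTransGen.single ?_) ih
      exact ⟨h2.2.1, h2.1, Ne.symm h2.2.2.1, by rw [Sym2.eq_swap]; exact h2.2.2.2⟩

lemma KR.mem_right {k : Fin 3} {W : Finset (Fin n)} {a b : Fin n} (ha : a ∈ W)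
    (h : KR c k W a b) : b ∈ W := by
  induction h with
  | refl => exact ha
  | tail _ h2 _ => exact h2.2.1

/-- Rainbow-free helper: if `c(a,b) = k` with `a,b` distinct and `r` distinct from both,
and `c(r,a) ≠ k`, `c(r,b) ≠ k`, then `c(r,a) = c(r,b)`. -/
lemma no_rainbow {m : ℕ} {c : Sym2 (Fin m) → Fin 3} (hg : GallaiColoring c)
    {a b r : Fin m} {k : Fin 3} (hab : a ≠ b) (har : a ≠ r) (hbr : b ≠ r)
    (hcab : c s(a, b) = k) (hra : c s(r, a) ≠ k) (hrb : c s(r, b) ≠ k) :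
    c s(r, a) = c s(r, b) := by
  by_contra hne
  refine hg ⟨a, b, r, hab, hbr, har, ?_, ?_, ?_⟩
  · rw [hcab, Sym2.eq_swap (a := b) (b := r)]
    exact fun h => hrb h.symm
  · rw [Sym2.eq_swap (a := b) (b := r), Sym2.eq_swap (a := a) (b := r)]
    exact fun h => hne h.symm
  · rw [hcab, Sym2.eq_swap (a := a) (b := r)]
    exact fun h => hra h.symm

/-- Monochromaticity towards a `k`-connected set from an outside vertex. -/
lemma mono_of_KR (hg : GallaiColoring c) {k : Fin 3} {W : Finset (Fin n)} {r x y : Fin n}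
    (hWr : ∀ u, KR c k W x u → r ≠ u ∧ c s(r, u) ≠ k)
    (hxy : KR c k W x y) : c s(r, x) = c s(r, y) := by
  induction hxy with
  | refl => rfl
  | tail h1 h2 ih =>
      rename_i b b'
      have hb := hWr b h1
      have hb' := hWr b' (h1.tail h2)
      rw [ih]
      exact no_rainbow hg h2.2.2.1 (fun h => hb.1 h.symm) (fun h => hb'.1 h.symm)
        h2.2.2.2 hb.2 hb'.2

/-- In a Gallai 3-coloring, some color class is disconnected on any `W` with ≥ 2
vertices. -/
lemma lemD (hg : GallaiColoring c) :
    ∀ W : Finset (Fin n), 2 ≤ W.card →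
      ∃ k : Fin 3, ∃ x ∈ W, ∃ y ∈ W, ¬ KR c k W x y := by
  intro W
  induction W using Finset.strongInductionOn with
  | _ W ih =>
    intro h2
    by_contra hcon
    push_neg at hcon
    rcases eq_or_lt_of_le h2 with h2' | h3
    · -- |W| = 2
      obtain ⟨x, y, hxy, hWxy⟩ := Finset.card_eq_two.1 h2'.symm
      have hx : x ∈ W := by rw [hWxy]; simp
      have hy : y ∈ W := by rw [hWxy]; simp
      have hval : ∀ k : Fin 3, c s(x, y) = k := by
        intro k
        have h := hcon k x hx y hy
        rcases Relation.ReflTransGen.cases_head h with h' | ⟨z, hz, _⟩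
        · exact absurd h' hxy
        · have hzW : z ∈ W := hz.2.1
          rw [hWxy] at hzW
          simp only [Finset.mem_insert, Finset.mem_singleton] at hzW
          rcases hzW with rfl | rfl
          · exact absurd rfl hz.2.2.1
          · exact hz.2.2.2
      have h0 := hval 0
      have h1 := hval 1
      rw [h0] at h1
      exact absurd h1 (by decide)
    · -- |W| ≥ 3
      have hWne : W.Nonempty := Finset.card_pos.1 (by omega)
      obtain ⟨x, hxW⟩ := hWne
      set W' := W.erase x with hW'
      have hW'card : W'.card = W.card - 1 := Finset.card_erase_of_mem hxW
      have hW'sub : W' ⊂ W := Finset.erase_ssubset hxW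
      obtain ⟨k, x₀, hx₀, y₀, hy₀, hnKR⟩ := ih W' hW'sub (by omega)
      have hx₀W : x₀ ∈ W := Finset.mem_of_mem_erase hx₀
      have hy₀W : y₀ ∈ W := Finset.mem_of_mem_erase hy₀
      -- f2 : every k-component of W' receives a k-edge from x
      have f2 : ∀ z ∈ W', ∃ w ∈ W', KR c k W' z w ∧ x ≠ w ∧ c s(x, w) = k := by
        intro z hz
        by_contra hno
        push_neg at hno
        have closure : ∀ t, KR c k W z t → t ∈ W' ∧ KR c k W' z t := by
          intro t ht
          induction ht with
          | refl => exact ⟨hz, Relation.ReflTransGen.refl⟩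
          | tail h1 hstep ih2 =>
              rename_i u v
              obtain ⟨huW', hzu⟩ := ih2
              by_cases hvx : v = x
              · subst hvx
                exact absurd (by rw [Sym2.eq_swap]; exact hstep.2.2.2)
                  (hno u huW' hzu (Ne.symm hstep.2.2.1))
              · have hvW' : v ∈ W' := Finset.mem_erase.2 ⟨hvx, hstep.2.1⟩
                exact ⟨hvW', hzu.tail ⟨huW', hvW', hstep.2.2⟩⟩
        by_cases hzx₀ : KR c k W' z x₀
        · have := (closure y₀ (hcon k z (Finset.mem_of_mem_erase hz) y₀ hy₀W)).2
          exact hnKR ((hzx₀.symm).trans this)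
        · exact hzx₀ (closure x₀ (hcon k z (Finset.mem_of_mem_erase hz) x₀ hx₀W)).2
      -- f3 : x has an edge of each color into W'
      have f3 : ∀ γ : Fin 3, ∃ w ∈ W', c s(x, w) = γ := by
        intro γ
        obtain ⟨y, hyW, hyx⟩ : ∃ y ∈ W, y ≠ x := by
          obtain ⟨a, haW, b, hbW, hab⟩ := Finset.one_lt_card.1 h2
          by_cases hax : a = x
          · exact ⟨b, hbW, by rw [← hax]; exact fun h => hab h.symm⟩
          · exact ⟨a, haW, hax⟩
        have h := hcon γ x hxW y hyW
        rcases Relation.ReflTransGen.cases_head h with h' | ⟨w, hw, _⟩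
        · exact absurd h'.symm hyx
        · exact ⟨w, Finset.mem_erase.2 ⟨Ne.symm hw.2.2.1, hw.2.1⟩, hw.2.2.2⟩
      -- all-γ property
      have allγ : ∀ γ : Fin 3, γ ≠ k → ∀ w ∈ W', c s(x, w) = γ →
          ∀ z ∈ W', ¬ KR c k W' w z → c s(w, z) = γ := by
        intro γ hγk w hwW' hxw z hzW' hnreach
        obtain ⟨yc, hycW', hycz, hxyc, hcyc⟩ := f2 z hzW'
        have hWr : ∀ u, KR c k W' z u → w ≠ u ∧ c s(w, u) ≠ k := by
          intro u hu
          constructor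
          · intro h
            subst h
            exact hnreach hu.symm
          · intro hcu
            have huW' : u ∈ W' := KR.mem_right hzW' hu
            refine hnreach (Relation.ReflTransGen.trans
              (Relation.ReflTransGen.single ⟨hwW', huW', ?_, hcu⟩)
              hu.symm)
            intro hq
            subst hq
            exact hnreach hu.symm
        have hmono : c s(w, z) = c s(w, yc) := mono_of_KR hg hWr hycz
        have hwx : w ≠ x := fun h => by
          subst h
          exact absurd hwW' (Finset.notMem_erase w W)
        have hycx : yc ≠ x := fun h => by
          subst h
          exact absurd hycW' (Finset.notMem_erase yc W)
        have hycw : yc ≠ w := by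
          intro h
          subst h
          exact hnreach hycz.symm
        have hwyc : c s(w, yc) ≠ k := (hWr yc hycz).2
        have h := no_rainbow hg (a := x) (b := yc) (r := w) (k := k)
          (Ne.symm hycx) (Ne.symm hwx) hycw hcyc
          (by rw [Sym2.eq_swap, hxw]; exact hγk) hwyc
        rw [hmono, ← h, Sym2.eq_swap]
        exact hxw
      -- endgame
      have hex : ∀ k' : Fin 3, ∃ γ₁ γ₂ : Fin 3, γ₁ ≠ γ₂ ∧ γ₁ ≠ k' ∧ γ₂ ≠ k' := by decide
      obtain ⟨γ₁, γ₂, hγ12, hγ1k, hγ2k⟩ := hex k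
      obtain ⟨w₁, hw₁, hxw₁⟩ := f3 γ₁
      obtain ⟨w₂, hw₂, hxw₂⟩ := f3 γ₂
      by_cases hsame : KR c k W' w₁ w₂
      · have hz : ∃ z ∈ W', ¬ KR c k W' w₁ z := by
          by_cases h : KR c k W' w₁ x₀
          · exact ⟨y₀, hy₀, fun hh => hnKR (h.symm.trans hh)⟩
          · exact ⟨x₀, hx₀, h⟩
        obtain ⟨z, hzW', hznr⟩ := hz
        have h1 : c s(w₁, z) = γ₁ := allγ γ₁ hγ1k w₁ hw₁ hxw₁ z hzW' hznr
        have h2 : c s(w₂, z) = γ₂ := allγ γ₂ hγ2k w₂ hw₂ hxw₂ z hzW'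
          (fun hh => hznr (hsame.trans hh))
        have hWr : ∀ u, KR c k W' w₁ u → z ≠ u ∧ c s(z, u) ≠ k := by
          intro u hu
          constructor
          · intro h
            subst h
            exact hznr hu
          · intro hcu
            have huW' : u ∈ W' := KR.mem_right hw₁ hu
            refine hznr (hu.tail ⟨huW', hzW', ?_, by rwa [Sym2.eq_swap]⟩)
            intro hq
            exact hznr (hq ▸ hu)
        have h3 : c s(z, w₁) = c s(z, w₂) := mono_of_KR hg hWr hsame
        rw [Sym2.eq_swap (a := w₁) (b := z)] at h1
        rw [Sym2.eq_swap (a := w₂) (b := z)] at h2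
        rw [h1, h2] at h3
        exact hγ12 h3
      · have h1 : c s(w₁, w₂) = γ₁ := allγ γ₁ hγ1k w₁ hw₁ hxw₁ w₂ hw₂ hsame
        have h2 : c s(w₂, w₁) = γ₂ := allγ γ₂ hγ2k w₂ hw₂ hxw₂ w₁ hw₁
          (fun hh => hsame hh.symm)
        rw [Sym2.eq_swap] at h2
        rw [h1] at h2
        exact hγ12 h2


/-- Component structure of a disconnected color class. -/
lemma structW (hg : GallaiColoring c) {W : Finset (Fin n)} (h2 : 2 ≤ W.card) :
    ∃ (k : Fin 3) (A : Fin n → Finset (Fin n)),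
      (∀ x ∈ W, x ∈ A x) ∧
      (∀ x ∈ W, A x ⊆ W) ∧
      (∀ x ∈ W, ∀ y ∈ A x, A y = A x) ∧
      (∀ x ∈ W, ∀ y ∈ W, y ∉ A x → x ≠ y ∧ c s(x, y) ≠ k) ∧
      (∀ x ∈ W, ∀ x' ∈ A x, ∀ y ∈ W, y ∉ A x → c s(x, y) = c s(x', y)) ∧
      (∃ x ∈ W, ∃ y ∈ W, y ∉ A x) := by
  classical
  obtain ⟨k, x₀, hx₀, y₀, hy₀, hn⟩ := lemD hg W h2
  refine ⟨k, fun x => W.filter (fun y => KR c k W x y), ?_, ?_, ?_, ?_, ?_, ?_⟩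
  · intro x hx
    exact Finset.mem_filter.2 ⟨hx, Relation.ReflTransGen.refl⟩
  · intro x _
    exact Finset.filter_subset _ _
  · intro x hx y hy
    have hxy : KR c k W x y := (Finset.mem_filter.1 hy).2
    ext z
    simp only [Finset.mem_filter]
    constructor
    · rintro ⟨hzW, hyz⟩
      exact ⟨hzW, hxy.trans hyz⟩
    · rintro ⟨hzW, hxz⟩
      exact ⟨hzW, (KR.symm hxy).trans hxz⟩
  · intro x hx y hyW hy
    have hnk : ¬ KR c k W x y := fun h => hy (Finset.mem_filter.2 ⟨hyW, h⟩)
    constructor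
    · rintro rfl
      exact hnk Relation.ReflTransGen.refl
    · intro hc
      by_cases hxy : x = y
      · subst hxy; exact hnk Relation.ReflTransGen.refl
      · exact hnk (Relation.ReflTransGen.single ⟨hx, hyW, hxy, hc⟩)
  · intro x hx x' hx' y hyW hy
    have hxx' : KR c k W x x' := (Finset.mem_filter.1 hx').2
    have hWr : ∀ u, KR c k W x u → y ≠ u ∧ c s(y, u) ≠ k := by
      intro u hu
      have hnky : ¬ KR c k W x y := fun h => hy (Finset.mem_filter.2 ⟨hyW, h⟩)
      constructor
      · rintro rfl
        exact hnky hu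
      · intro hcu
        have huW : u ∈ W := KR.mem_right hx hu
        refine hnky (hu.tail ⟨huW, hyW, ?_, by rwa [Sym2.eq_swap]⟩)
        rintro rfl
        exact hnky hu
    have := mono_of_KR hg hWr hxx'
    rw [Sym2.eq_swap (a := y) (b := x), Sym2.eq_swap (a := y) (b := x')] at this
    exact this
  · exact ⟨x₀, hx₀, y₀, hy₀, fun h => hn (Finset.mem_filter.1 h).2⟩

/-- Chain of removed stages (latest first): every vertex in a stage sees everything
in `W` and in all later-removed (smaller index) stages in its own color `f`. -/
def ChainH (c : Sym2 (Fin n) → Fin 3) (f : Fin n → Fin 3) (W : Finset (Fin n))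
    (L : List (Finset (Fin n))) : Prop :=
  (∀ i : ℕ, i < L.length → ∀ o ∈ L.getD i ∅, ∀ x : Fin n,
      (x ∈ W ∨ ∃ j : ℕ, j < i ∧ x ∈ L.getD j ∅) → o ≠ x ∧ c s(o, x) = f o) ∧
  (∀ R ∈ L, R.card ≤ 2) ∧
  (∀ x : Fin n, x ∈ W ∨ ∃ i : ℕ, i < L.length ∧ x ∈ L.getD i ∅)

def idxL (L : List (Finset (Fin n))) (u : Fin n) : ℕ :=
  L.findIdx (fun R => u ∈ R)

def prec (L : List (Finset (Fin n))) (u v : Fin n) : Prop :=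
  ∃ i j : ℕ, i < L.length ∧ j < i ∧ u ∈ L.getD i ∅ ∧ v ∈ L.getD j ∅

def Ok (f : Fin n → Fin 3) (kd : Fin 3) (W : Finset (Fin n)) : Finset (Fin n) :=
  (Finset.univ \ W).filter (fun u => f u = kd)

open Classical in
noncomputable def gbSet (f : Fin n → Fin 3) (kd : Fin 3) (W : Finset (Fin n))
    (L : List (Finset (Fin n))) (v : Fin n) : Finset (Fin n) :=
  (Finset.univ \ W).filter (fun u => f u ≠ kd ∧ prec L u v)

open Classical in
noncomputable def badS (f : Fin n → Fin 3) (kd : Fin 3) (W : Finset (Fin n))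
    (L : List (Finset (Fin n))) : Finset (Fin n) :=
  (Ok f kd W).filter (fun v => (gbSet f kd W L v).card ≤ 2)

variable {c : Sym2 (Fin n) → Fin 3} {f : Fin n → Fin 3} {W : Finset (Fin n)}
  {L : List (Finset (Fin n))}

section chainlemmas
variable (hch : ChainH c f W L)
include hch

lemma chain_idx {u : Fin n} (hu : u ∉ W) :
    idxL L u < L.length ∧ u ∈ L.getD (idxL L u) ∅ := by
  obtain ⟨i, hi, hmem⟩ := (hch.2.2 u).resolve_left hu
  unfold idxL
  have hlt : L.findIdx (fun R => decide (u ∈ R)) < L.length := by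
    apply List.findIdx_lt_length_of_exists
    refine ⟨L[i], List.getElem_mem hi, ?_⟩
    rw [List.getD_eq_getElem _ _ hi] at hmem
    simpa using hmem
  refine ⟨hlt, ?_⟩
  rw [List.getD_eq_getElem _ _ hlt]
  simpa using List.findIdx_getElem (w := hlt)

lemma chain_uniq {u : Fin n} {i j : ℕ} (hi : i < L.length) (hj : j < L.length)
    (hui : u ∈ L.getD i ∅) (huj : u ∈ L.getD j ∅) : i = j := by
  rcases lt_trichotomy i j with h | h | h
  · exact absurd rfl (hch.1 j hj u huj u (Or.inr ⟨i, h, hui⟩)).1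
  · exact h
  · exact absurd rfl (hch.1 i hi u hui u (Or.inr ⟨j, h, huj⟩)).1

lemma chain_idx_eq {u : Fin n} {i : ℕ} (hi : i < L.length) (hui : u ∈ L.getD i ∅)
    (hu : u ∉ W) : i = idxL L u :=
  chain_uniq hch hi (chain_idx hch hu).1 hui (chain_idx hch hu).2

lemma chain_not_W {i : ℕ} (hi : i < L.length) {u : Fin n} (hu : u ∈ L.getD i ∅) :
    u ∉ W :=
  fun hW => (hch.1 i hi u hu u (Or.inl hW)).1 rfl

lemma prec_edge {u v : Fin n} (h : prec L u v) : u ≠ v ∧ c s(u, v) = f u := by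
  obtain ⟨i, j, hi, hji, hui, hvj⟩ := h
  exact hch.1 i hi u hui v (Or.inr ⟨j, hji, hvj⟩)

lemma prec_of_idx {u v : Fin n} (hu : u ∉ W) (hv : v ∉ W)
    (h : idxL L v < idxL L u) : prec L u v :=
  ⟨idxL L u, idxL L v, (chain_idx hch hu).1, h, (chain_idx hch hu).2, (chain_idx hch hv).2⟩

lemma idx_of_prec {u v : Fin n} (hu : u ∉ W) (hv : v ∉ W) (h : prec L u v) :
    idxL L v < idxL L u := by
  obtain ⟨i, j, hi, hji, hui, hvj⟩ := h
  have e1 := chain_idx_eq hch hi hui hu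
  have e2 := chain_idx_eq hch (lt_trans hji hi) hvj hv
  omega

lemma chain_W_edge {u x : Fin n} (hu : u ∉ W) (hx : x ∈ W) :
    u ≠ x ∧ c s(u, x) = f u :=
  hch.1 (idxL L u) (chain_idx hch hu).1 u (chain_idx hch hu).2 x (Or.inl hx)

lemma stage_card {i : ℕ} (hi : i < L.length) : (L.getD i ∅).card ≤ 2 := by
  rw [List.getD_eq_getElem _ _ hi]
  exact hch.2.1 _ (List.getElem_mem hi)

/-- Core counting step for the pigeonhole argument. -/
lemma bad_not_min {kw : Fin 3} {w : Fin n} (hw : w ∈ badS f kw W L)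
    {t : Finset (Fin n)} (ht : ∀ u ∈ t, u ∉ W ∧ f u ≠ kw)
    (htc : 4 ≤ t.card) (hmin : ∀ u ∈ t, idxL L w ≤ idxL L u) : False := by
  classical
  have hwOk := Finset.mem_filter.1 hw
  have hwchain := Finset.mem_filter.1 hwOk.1
  have hwW : w ∉ W := (Finset.mem_sdiff.1 hwchain.1).2
  have hwf : f w = kw := hwchain.2
  have hgb : (gbSet f kw W L w).card ≤ 2 := hwOk.2
  set D := L.getD (idxL L w) ∅ with hD
  have hDcard : D.card ≤ 2 := stage_card hch (chain_idx hch hwW).1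
  have hwD : w ∈ D := (chain_idx hch hwW).2
  have hsub : t ∩ D ⊆ D.erase w := by
    intro u hu
    refine Finset.mem_erase.2 ⟨?_, (Finset.mem_inter.1 hu).2⟩
    intro h
    exact (ht u (Finset.mem_inter.1 hu).1).2 (h ▸ hwf)
  have hInter : (t ∩ D).card ≤ 1 := by
    have := Finset.card_le_card hsub
    have h2 := Finset.card_erase_of_mem hwD
    omega
  have hC : 3 ≤ (t \ D).card := by
    have h1 := Finset.card_sdiff_add_card_inter t D
    omega
  have hCsub : t \ D ⊆ gbSet f kw W L w := by
    intro u hu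
    obtain ⟨hut, huD⟩ := Finset.mem_sdiff.1 hu
    have huW : u ∉ W := (ht u hut).1
    rw [gbSet, Finset.mem_filter]
    refine ⟨Finset.mem_sdiff.2 ⟨Finset.mem_univ u, huW⟩, (ht u hut).2, ?_⟩
    refine prec_of_idx hch huW hwW ?_
    rcases lt_or_eq_of_le (hmin u hut) with h | h
    · exact h
    · exfalso
      apply huD
      rw [hD, h]
      exact (chain_idx hch huW).2
  have := Finset.card_le_card hCsub
  omega

/-- Pigeonhole: not all three colors can have two "bad" chain vertices. -/
lemma pigeon_aux {ka kb kc : Fin 3} (hab : ka ≠ kb) (hac : ka ≠ kc)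
    (hbc : kb ≠ kc) (h2a : 2 ≤ (badS f ka W L).card) (h2b : 2 ≤ (badS f kb W L).card)
    (h2c : 2 ≤ (badS f kc W L).card) : False := by
  classical
  obtain ⟨a₀, ha₀, b₀, hb₀, hab₀⟩ := Finset.one_lt_card.1 h2a
  obtain ⟨a₁, ha₁, b₁, hb₁, hab₁⟩ := Finset.one_lt_card.1 h2b
  obtain ⟨a₂, ha₂, b₂, hb₂, hab₂⟩ := Finset.one_lt_card.1 h2c
  have hfact : ∀ kd : Fin 3, ∀ v ∈ badS f kd W L, v ∉ W ∧ f v = kd := by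
    intro kd v hv
    have h1 := Finset.mem_filter.1 hv
    have h2 := Finset.mem_filter.1 h1.1
    exact ⟨(Finset.mem_sdiff.1 h2.1).2, h2.2⟩
  obtain ⟨hWa₀, hfa₀⟩ := hfact ka a₀ ha₀
  obtain ⟨hWb₀, hfb₀⟩ := hfact ka b₀ hb₀
  obtain ⟨hWa₁, hfa₁⟩ := hfact kb a₁ ha₁
  obtain ⟨hWb₁, hfb₁⟩ := hfact kb b₁ hb₁
  obtain ⟨hWa₂, hfa₂⟩ := hfact kc a₂ ha₂
  obtain ⟨hWb₂, hfb₂⟩ := hfact kc b₂ hb₂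
  have dd : ∀ u v : Fin n, ∀ x y : Fin 3, f u = x → f v = y → x ≠ y → u ≠ v :=
    fun u v x y hu hv hxy h => hxy (by rw [← hu, h, hv])
  set s6 : Finset (Fin n) := {a₀, b₀, a₁, b₁, a₂, b₂} with hs6
  obtain ⟨w, hw6, hwmin⟩ := Finset.exists_min_image s6 (idxL L)
    ⟨a₀, by simp [hs6]⟩
  have close : ∀ (kw : Fin 3), w ∈ badS f kw W L → ∀ p q r s : Fin n,
      p ∈ s6 → q ∈ s6 → r ∈ s6 → s ∈ s6 →
      p ∉ W → q ∉ W → r ∉ W → s ∉ W →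
      f p ≠ kw → f q ≠ kw → f r ≠ kw → f s ≠ kw →
      p ≠ q → p ≠ r → p ≠ s → q ≠ r → q ≠ s → r ≠ s → False := by
    intro kw hw p q r s hp6 hq6 hr6 hs6' hpW hqW hrW hsW hfp hfq hfr hfs
      hpq hpr hps hqr hqs hrs
    refine bad_not_min hch hw (t := {p, q, r, s}) ?_ ?_ ?_
    · intro u hu
      simp only [Finset.mem_insert, Finset.mem_singleton] at hu
      rcases hu with rfl | rfl | rfl | rfl
      · exact ⟨hpW, hfp⟩
      · exact ⟨hqW, hfq⟩
      · exact ⟨hrW, hfr⟩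
      · exact ⟨hsW, hfs⟩
    · have h4 : ({p, q, r, s} : Finset (Fin n)).card = 4 := by
        rw [Finset.card_insert_of_notMem (by simp [hpq, hpr, hps]),
          Finset.card_insert_of_notMem (by simp [hqr, hqs]),
          Finset.card_insert_of_notMem (by simp [hrs]), Finset.card_singleton]
      omega
    · intro u hu
      simp only [Finset.mem_insert, Finset.mem_singleton] at hu
      rcases hu with rfl | rfl | rfl | rfl
      · exact hwmin u hp6
      · exact hwmin u hq6
      · exact hwmin u hr6
      · exact hwmin u hs6'
  have m0 : a₀ ∈ s6 := by simp [hs6]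
  have m1 : b₀ ∈ s6 := by simp [hs6]
  have m2 : a₁ ∈ s6 := by simp [hs6]
  have m3 : b₁ ∈ s6 := by simp [hs6]
  have m4 : a₂ ∈ s6 := by simp [hs6]
  have m5 : b₂ ∈ s6 := by simp [hs6]
  have e12 : ∀ u v : Fin n, f u = kb → f v = kc → u ≠ v := fun u v hu hv => dd u v kb kc hu hv hbc
  have e01 : ∀ u v : Fin n, f u = ka → f v = kb → u ≠ v := fun u v hu hv => dd u v ka kb hu hv hab
  have e02 : ∀ u v : Fin n, f u = ka → f v = kc → u ≠ v := fun u v hu hv => dd u v ka kc hu hv hac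
  simp only [hs6, Finset.mem_insert, Finset.mem_singleton] at hw6
  rcases hw6 with rfl | rfl | rfl | rfl | rfl | rfl
  · exact close ka ha₀ a₁ b₁ a₂ b₂ m2 m3 m4 m5 hWa₁ hWb₁ hWa₂ hWb₂
      (hfa₁ ▸ Ne.symm hab) (hfb₁ ▸ Ne.symm hab) (hfa₂ ▸ Ne.symm hac) (hfb₂ ▸ Ne.symm hac)
      hab₁ (e12 a₁ a₂ hfa₁ hfa₂) (e12 a₁ b₂ hfa₁ hfb₂) (e12 b₁ a₂ hfb₁ hfa₂)
      (e12 b₁ b₂ hfb₁ hfb₂) hab₂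
  · exact close ka hb₀ a₁ b₁ a₂ b₂ m2 m3 m4 m5 hWa₁ hWb₁ hWa₂ hWb₂
      (hfa₁ ▸ Ne.symm hab) (hfb₁ ▸ Ne.symm hab) (hfa₂ ▸ Ne.symm hac) (hfb₂ ▸ Ne.symm hac)
      hab₁ (e12 a₁ a₂ hfa₁ hfa₂) (e12 a₁ b₂ hfa₁ hfb₂) (e12 b₁ a₂ hfb₁ hfa₂)
      (e12 b₁ b₂ hfb₁ hfb₂) hab₂
  · exact close kb ha₁ a₀ b₀ a₂ b₂ m0 m1 m4 m5 hWa₀ hWb₀ hWa₂ hWb₂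
      (hfa₀ ▸ hab) (hfb₀ ▸ hab) (hfa₂ ▸ Ne.symm hbc) (hfb₂ ▸ Ne.symm hbc)
      hab₀ (e02 a₀ a₂ hfa₀ hfa₂) (e02 a₀ b₂ hfa₀ hfb₂) (e02 b₀ a₂ hfb₀ hfa₂)
      (e02 b₀ b₂ hfb₀ hfb₂) hab₂
  · exact close kb hb₁ a₀ b₀ a₂ b₂ m0 m1 m4 m5 hWa₀ hWb₀ hWa₂ hWb₂
      (hfa₀ ▸ hab) (hfb₀ ▸ hab) (hfa₂ ▸ Ne.symm hbc) (hfb₂ ▸ Ne.symm hbc)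
      hab₀ (e02 a₀ a₂ hfa₀ hfa₂) (e02 a₀ b₂ hfa₀ hfb₂) (e02 b₀ a₂ hfb₀ hfa₂)
      (e02 b₀ b₂ hfb₀ hfb₂) hab₂
  · exact close kc ha₂ a₀ b₀ a₁ b₁ m0 m1 m2 m3 hWa₀ hWb₀ hWa₁ hWb₁
      (hfa₀ ▸ hac) (hfb₀ ▸ hac) (hfa₁ ▸ hbc) (hfb₁ ▸ hbc)
      hab₀ (e01 a₀ a₁ hfa₀ hfa₁) (e01 a₀ b₁ hfa₀ hfb₁) (e01 b₀ a₁ hfb₀ hfa₁)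
      (e01 b₀ b₁ hfb₀ hfb₁) hab₁
  · exact close kc hb₂ a₀ b₀ a₁ b₁ m0 m1 m2 m3 hWa₀ hWb₀ hWa₁ hWb₁
      (hfa₀ ▸ hac) (hfb₀ ▸ hac) (hfa₁ ▸ hbc) (hfb₁ ▸ hbc)
      hab₀ (e01 a₀ a₁ hfa₀ hfa₁) (e01 a₀ b₁ hfa₀ hfb₁) (e01 b₀ a₁ hfb₀ hfa₁)
      (e01 b₀ b₁ hfb₀ hfb₁) hab₁

end chainlemmas


section master
variable {c : Sym2 (Fin n) → Fin 3} {f : Fin n → Fin 3} {W : Finset (Fin n)}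
  {L : List (Finset (Fin n))}

/-- Master connectivity lemma. -/
lemma master (h7 : 7 ≤ n) {kd : Fin 3} (hch : ChainH c f W L)
    (Dset : Finset (Fin n)) (hDsub : Dset ⊆ Ok f kd W) (hD1 : Dset.card ≤ 1)
    (hkeep : ∀ v ∈ Ok f kd W, v ∉ Dset → 3 ≤ (gbSet f kd W L v).card)
    (hWH : ∀ X : Finset (Fin n), X.card ≤ 2 →
      (∀ u ∈ (Finset.univ \ W).filter (fun u => f u ≠ kd), u ∈ X) →
      ∀ u ∈ W \ X, ∀ v ∈ W \ X, RW c kd (W \ X) u v) :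
    ∀ X : Finset (Fin n), X.card ≤ 2 →
      ∀ a ∈ (Finset.univ \ Dset) \ X, ∀ b ∈ (Finset.univ \ Dset) \ X,
        RW c kd ((Finset.univ \ Dset) \ X) a b := by
  classical
  intro X hX
  set S : Finset (Fin n) := Finset.univ \ Dset with hS
  set SX : Finset (Fin n) := S \ X with hSX
  set goods : Finset (Fin n) := (Finset.univ \ W).filter (fun u => f u ≠ kd) with hgoods
  have hWS : W ⊆ S := by
    intro w hw
    refine Finset.mem_sdiff.2 ⟨Finset.mem_univ w, fun hD => ?_⟩
    have := Finset.mem_filter.1 (hDsub hD)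
    exact (Finset.mem_sdiff.1 this.1).2 hw
  have hgoodsS : goods ⊆ S := by
    intro u hu
    refine Finset.mem_sdiff.2 ⟨Finset.mem_univ u, fun hD => ?_⟩
    exact (Finset.mem_filter.1 hu).2 (Finset.mem_filter.1 (hDsub hD)).2
  have hScard : n - 1 ≤ S.card := by
    have h1 : S.card = n - Dset.card := by
      rw [hS, Finset.card_sdiff_of_subset (Finset.subset_univ _), Finset.card_univ, Fintype.card_fin]
    omega
  have hSXcard : 4 ≤ SX.card := by
    have h1 := Finset.card_sdiff_add_card_inter S X
    rw [← hSX] at h1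
    have h2 : (S ∩ X).card ≤ X.card := Finset.card_le_card (Finset.inter_subset_right)
    omega
  have hOkD : ∀ u, u ∈ SX → u ∉ W → f u = kd → u ∈ Ok f kd W ∧ u ∉ Dset := by
    intro u hu huW hfu
    have huS := (Finset.mem_sdiff.1 hu).1
    exact ⟨Finset.mem_filter.2 ⟨Finset.mem_sdiff.2 ⟨Finset.mem_univ u, huW⟩, hfu⟩,
      (Finset.mem_sdiff.1 huS).2⟩
  have hgb_goods : ∀ v, gbSet f kd W L v ⊆ goods := by
    intro v u hu
    have := Finset.mem_filter.1 hu
    exact Finset.mem_filter.2 ⟨this.1, this.2.1⟩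
  by_cases hGne : (goods \ X).Nonempty
  · -- there is a surviving good chain vertex
    obtain ⟨g, hgmem, hgmax⟩ := Finset.exists_max_image (goods \ X) (idxL L) hGne
    have hgchainW : g ∉ W := (Finset.mem_sdiff.1 (Finset.mem_filter.1
      (Finset.mem_sdiff.1 hgmem).1).1).2
    have hgf : f g ≠ kd := (Finset.mem_filter.1 (Finset.mem_sdiff.1 hgmem).1).2
    have hgSX : g ∈ SX := Finset.mem_sdiff.2
      ⟨hgoodsS (Finset.mem_sdiff.1 hgmem).1, (Finset.mem_sdiff.1 hgmem).2⟩
    have claimK : ∀ u, u ∈ SX → u ∉ W → f u = kd → idxL L g ≤ idxL L u → False := by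
      intro u hu huW hfu hle
      obtain ⟨huOk, huD⟩ := hOkD u hu huW hfu
      have h3 := hkeep u huOk huD
      have hne : (gbSet f kd W L u \ X).Nonempty := by
        rw [← Finset.card_pos]
        have h4 := Finset.card_sdiff_add_card_inter (gbSet f kd W L u) X
        have h5 : ((gbSet f kd W L u) ∩ X).card ≤ X.card :=
          Finset.card_le_card Finset.inter_subset_right
        omega
      obtain ⟨h, hh⟩ := hne
      have hhg : h ∈ goods \ X := Finset.mem_sdiff.2
        ⟨hgb_goods u (Finset.mem_sdiff.1 hh).1, (Finset.mem_sdiff.1 hh).2⟩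
      have hhle := hgmax h hhg
      have hprec : prec L h u := (Finset.mem_filter.1 (Finset.mem_sdiff.1 hh).1).2.2
      have hhW : h ∉ W := (Finset.mem_sdiff.1 (Finset.mem_filter.1
        (Finset.mem_sdiff.1 hh).1).1).2
      have := idx_of_prec hch hhW huW hprec
      omega
    have claimG : ∀ u, u ∈ SX → u ∉ W → idxL L g < idxL L u → False := by
      intro u hu huW hlt
      by_cases hfu : f u = kd
      · exact claimK u hu huW hfu (le_of_lt hlt)
      · have hug : u ∈ goods \ X := Finset.mem_sdiff.2
          ⟨Finset.mem_filter.2 ⟨Finset.mem_sdiff.2 ⟨Finset.mem_univ u, huW⟩, hfu⟩,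
            (Finset.mem_sdiff.1 hu).2⟩
        have := hgmax u hug
        omega
    have reach : ∀ v ∈ SX, RW c kd SX v g := by
      intro v hv
      by_cases hvg : v = g
      · exact hvg ▸ Relation.ReflTransGen.refl
      by_cases hvW : v ∈ W
      · obtain ⟨hne, hcol⟩ := chain_W_edge hch hgchainW hvW
        refine RW.single hv hgSX (Ne.symm hne) ?_
        rw [Sym2.eq_swap]
        rw [hcol]
        exact hgf
      · rcases lt_trichotomy (idxL L v) (idxL L g) with hlt | heq | hgt
        · have hprec : prec L g v := prec_of_idx hch hgchainW hvW hlt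
          obtain ⟨hne, hcol⟩ := prec_edge hch hprec
          refine RW.single hv hgSX (Ne.symm hne) ?_
          rw [Sym2.eq_swap, hcol]
          exact hgf
        · -- same stage as g : go through a third vertex
          have hfv : f v ≠ kd := by
            intro hfv
            exact claimK v hv hvW hfv (le_of_eq heq.symm)
          have hyex : ∃ y ∈ SX, y ∉ L.getD (idxL L g) ∅ := by
            by_contra hcon
            push_neg at hcon
            have hsub : SX ⊆ L.getD (idxL L g) ∅ := hcon
            have := Finset.card_le_card hsub
            have := stage_card hch (chain_idx hch hgchainW).1
            omega
          obtain ⟨y, hySX, hyst⟩ := hyex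
          have hyform : y ∈ W ∨ (y ∉ W ∧ idxL L y < idxL L g) := by
            by_cases hyW : y ∈ W
            · exact Or.inl hyW
            · refine Or.inr ⟨hyW, ?_⟩
              rcases lt_trichotomy (idxL L y) (idxL L g) with h | h | h
              · exact h
              · exfalso
                apply hyst
                rw [← h]
                exact (chain_idx hch hyW).2
              · exact absurd h (fun hh => claimG y hySX hyW hh)
          have step1 : RW c kd SX v y := by
            rcases hyform with hyW | ⟨hyW, hylt⟩
            · obtain ⟨hne, hcol⟩ := chain_W_edge hch hvW hyW
              refine RW.single hv hySX hne ?_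
              rw [hcol]; exact hfv
            · have hprec : prec L v y := prec_of_idx hch hvW hyW (heq ▸ hylt)
              obtain ⟨hne, hcol⟩ := prec_edge hch hprec
              refine RW.single hv hySX hne ?_
              rw [hcol]; exact hfv
          have step2 : RW c kd SX y g := by
            rcases hyform with hyW | ⟨hyW, hylt⟩
            · obtain ⟨hne, hcol⟩ := chain_W_edge hch hgchainW hyW
              refine RW.single hySX hgSX (Ne.symm hne) ?_
              rw [Sym2.eq_swap, hcol]; exact hgf
            · have hprec : prec L g y := prec_of_idx hch hgchainW hyW hylt
              obtain ⟨hne, hcol⟩ := prec_edge hch hprec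
              refine RW.single hySX hgSX (Ne.symm hne) ?_
              rw [Sym2.eq_swap, hcol]; exact hgf
          exact step1.trans step2
        · exact absurd hgt (fun hh => claimG v hv hvW hh)
    intro a ha b hb
    exact (reach a ha).trans (reach b hb).symm
  · -- no surviving goods : everything left is in W
    have hgsub : goods ⊆ X := by
      intro u hu
      by_contra huX
      exact hGne ⟨u, Finset.mem_sdiff.2 ⟨hu, huX⟩⟩
    have hWonly : ∀ u ∈ SX, u ∈ W := by
      intro u hu
      by_contra huW
      by_cases hfu : f u = kd
      · obtain ⟨huOk, huD⟩ := hOkD u hu huW hfu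
        have h3 := hkeep u huOk huD
        have h4 : gbSet f kd W L u ⊆ X := fun z hz => hgsub (hgb_goods u hz)
        have := Finset.card_le_card h4
        omega
      · have : u ∈ goods := Finset.mem_filter.2
          ⟨Finset.mem_sdiff.2 ⟨Finset.mem_univ u, huW⟩, hfu⟩
        exact (Finset.mem_sdiff.1 hu).2 (hgsub this)
    intro a ha b hb
    have haW : a ∈ W \ X := Finset.mem_sdiff.2 ⟨hWonly a ha, (Finset.mem_sdiff.1 ha).2⟩
    have hbW : b ∈ W \ X := Finset.mem_sdiff.2 ⟨hWonly b hb, (Finset.mem_sdiff.1 hb).2⟩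
    refine RW.mono ?_ (hWH X hX hgsub a haW b hbW)
    intro z hz
    exact Finset.mem_sdiff.2 ⟨hWS (Finset.mem_sdiff.1 hz).1, (Finset.mem_sdiff.1 hz).2⟩

end master

/-- Folklore: in the 2-colored multipartite core, one of the two colors connects
everything across parts. -/
lemma folklore {W : Finset (Fin n)} {A : Fin n → Finset (Fin n)} {kf : Fin 3}
    (hAmem : ∀ x ∈ W, x ∈ A x)
    (hAsub : ∀ x ∈ W, A x ⊆ W)
    (hAeq : ∀ x ∈ W, ∀ y ∈ A x, A y = A x)
    (hcross : ∀ x ∈ W, ∀ y ∈ W, y ∉ A x → x ≠ y ∧ c s(x, y) ≠ kf)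
    (hmono : ∀ x ∈ W, ∀ x' ∈ A x, ∀ y ∈ W, y ∉ A x → c s(x, y) = c s(x', y))
    (htwo : ∃ x ∈ W, ∃ y ∈ W, y ∉ A x) :
    ∃ γ : Fin 3, γ ≠ kf ∧ ∀ u ∈ W, ∀ v ∈ W,
      Relation.ReflTransGen (fun a b => a ∈ W ∧ b ∈ W ∧ b ∉ A a ∧ c s(a, b) = γ) u v := by
  classical
  have hex3 : ∀ k : Fin 3, ∃ γ₁ γ₂ : Fin 3, γ₁ ≠ γ₂ ∧ γ₁ ≠ k ∧ γ₂ ≠ k ∧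
      (∀ x : Fin 3, x ≠ k → x ≠ γ₁ → x = γ₂) := by decide
  obtain ⟨γ₁, γ₂, h12, h1k, h2k, hother⟩ := hex3 kf
  have notA_symm : ∀ x ∈ W, ∀ y ∈ W, y ∉ A x → x ∉ A y := by
    intro x hx y hy hyx hxy
    exact hyx (hAeq y hy x hxy ▸ hAmem y hy)
  by_cases hγ₁ : ∀ u ∈ W, ∀ v ∈ W,
      Relation.ReflTransGen (fun a b => a ∈ W ∧ b ∈ W ∧ b ∉ A a ∧ c s(a, b) = γ₁) u v
  · exact ⟨γ₁, h1k, hγ₁⟩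
  push_neg at hγ₁
  obtain ⟨u₀, hu₀, v₀, hv₀, hnr⟩ := hγ₁
  set Rel : Fin n → Fin n → Prop :=
    fun a b => a ∈ W ∧ b ∈ W ∧ b ∉ A a ∧ c s(a, b) = γ₁ with hRel
  set Acl : Finset (Fin n) := W.filter (fun z => Relation.ReflTransGen Rel u₀ z) with hAcl
  have hu₀A : u₀ ∈ Acl := Finset.mem_filter.2 ⟨hu₀, Relation.ReflTransGen.refl⟩
  have hv₀A : v₀ ∉ Acl := fun h => hnr (Finset.mem_filter.1 h).2
  have cross2 : ∀ a ∈ Acl, ∀ b ∈ W, b ∉ Acl → b ∉ A a → c s(a, b) = γ₂ := by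
    intro a ha b hbW hbA hbAa
    have haW : a ∈ W := (Finset.mem_filter.1 ha).1
    refine hother _ (hcross a haW b hbW hbAa).2 ?_
    intro hc
    exact hbA (Finset.mem_filter.2 ⟨hbW,
      ((Finset.mem_filter.1 ha).2).tail ⟨haW, hbW, hbAa, hc⟩⟩)
  set Rel2 : Fin n → Fin n → Prop :=
    fun a b => a ∈ W ∧ b ∈ W ∧ b ∉ A a ∧ c s(a, b) = γ₂ with hRel2
  have hstep2 : ∀ a ∈ W, ∀ b ∈ W, b ∉ A a → c s(a, b) = γ₂ →
      Relation.ReflTransGen Rel2 a b :=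
    fun a ha b hb h1 h2 => Relation.ReflTransGen.single ⟨ha, hb, h1, h2⟩
  have hsym2 : Symmetric Rel2 := by
    intro a b h
    exact ⟨h.2.1, h.1, notA_symm a h.1 b h.2.1 h.2.2.1, by rw [Sym2.eq_swap]; exact h.2.2.2⟩
  have hanchor_done : (∃ z₀ ∈ W, ∀ v ∈ W, Relation.ReflTransGen Rel2 z₀ v) →
      ∀ u ∈ W, ∀ v ∈ W, Relation.ReflTransGen Rel2 u v := by
    rintro ⟨z₀, hz₀, hz⟩ u hu v hv
    exact Relation.ReflTransGen.trans
      (by haveI : Std.Symm Rel2 := ⟨fun a b h => hsym2 h⟩; exact Std.Symm.symm (r := Relation.ReflTransGen Rel2) _ _ (hz u hu)) (hz v hv)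
  refine ⟨γ₂, h2k, hanchor_done ?_⟩
  by_cases hsplit : ∃ p ∈ W, ∃ q ∈ A p, p ∈ Acl ∧ q ∉ Acl
  · -- a split part : it is a γ₂-hub
    obtain ⟨p, hpW, q, hqAp, hpA, hqA⟩ := hsplit
    have hqW : q ∈ W := hAsub p hpW hqAp
    have heqqp : A q = A p := hAeq p hpW q hqAp
    have hub : ∀ p' ∈ A p, ∀ z ∈ W, z ∉ A p → c s(p', z) = γ₂ := by
      intro p' hp' z hzW hzA
      by_cases hzAcl : z ∈ Acl
      · have hqz : q ∉ A z := by
          intro h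
          have e1 : A q = A z := hAeq z hzW q h
          refine hzA ?_
          rw [← heqqp, e1]
          exact hAmem z hzW
        have h1 : c s(z, q) = γ₂ := cross2 z hzAcl q hqW hqA hqz
        have h2 : c s(q, z) = c s(p', z) :=
          hmono q hqW p' (by rw [heqqp]; exact hp') z hzW (by rw [heqqp]; exact hzA)
        rw [← h2, Sym2.eq_swap]
        exact h1
      · have h1 : c s(p, z) = γ₂ := cross2 p hpA z hzW hzAcl hzA
        have h2 : c s(p, z) = c s(p', z) := hmono p hpW p' hp' z hzW hzA
        rw [← h2]
        exact h1
    obtain ⟨x₀, hx₀, y₀, hy₀, hy₀x₀⟩ := htwo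
    obtain ⟨z, hzW, hzA⟩ : ∃ z ∈ W, z ∉ A p := by
      by_cases h : y₀ ∈ A p
      · refine ⟨x₀, hx₀, fun hx₀A => ?_⟩
        have e1 : A x₀ = A p := hAeq p hpW x₀ hx₀A
        exact hy₀x₀ (by rw [e1]; exact h)
      · exact ⟨y₀, hy₀, h⟩
    refine ⟨p, hpW, ?_⟩
    intro v hv
    by_cases hvA : v ∈ A p
    · by_cases hvp : v = p
      · exact hvp ▸ Relation.ReflTransGen.refl
      · have s1 : Relation.ReflTransGen Rel2 p z :=
          hstep2 p hpW z hzW hzA (hub p (hAmem p hpW) z hzW hzA)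
        have s2 : Relation.ReflTransGen Rel2 z v := by
          refine hstep2 z hzW v hv ?_ ?_
          · intro h
            have e1 : A v = A z := hAeq z hzW v h
            have e2 : A v = A p := hAeq p hpW v hvA
            refine hzA ?_
            rw [← e2, e1]
            exact hAmem z hzW
          · rw [Sym2.eq_swap]
            exact hub v hvA z hzW hzA
        exact s1.trans s2
    · exact hstep2 p hpW v hv hvA (hub p (hAmem p hpW) v hv hvA)
  · -- no split part : Acl is a union of parts
    push_neg at hsplit
    have hApart : ∀ a ∈ Acl, ∀ q ∈ A a, q ∈ Acl := by
      intro a ha q hq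
      exact hsplit a (Finset.mem_filter.1 ha).1 q hq ha
    refine ⟨u₀, hu₀, ?_⟩
    intro v hv
    by_cases hvA : v ∈ Acl
    · have h1 : v₀ ∉ A u₀ := fun h => hv₀A (hApart u₀ hu₀A v₀ h)
      have s1 : Relation.ReflTransGen Rel2 u₀ v₀ :=
        hstep2 u₀ hu₀ v₀ hv₀ h1 (cross2 u₀ hu₀A v₀ hv₀ hv₀A h1)
      have h2 : v₀ ∉ A v := fun h => hv₀A (hApart v hvA v₀ h)
      have s2 : Relation.ReflTransGen Rel2 v₀ v := by
        refine hstep2 v₀ hv₀ v hv (notA_symm v hv v₀ hv₀ h2) ?_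
        rw [Sym2.eq_swap]
        exact cross2 v hvA v₀ hv₀ hv₀A h2
      exact s1.trans s2
    · have h1 : v ∉ A u₀ := fun h => hvA (hApart u₀ hu₀A v h)
      exact hstep2 u₀ hu₀ v hv h1 (cross2 u₀ hu₀A v hv hvA h1)

section terminal
variable {c : Sym2 (Fin n) → Fin 3} {f : Fin n → Fin 3} {W : Finset (Fin n)}
  {L : List (Finset (Fin n))}

/-- The terminal case of the recursion: build the required 3-connected
two-colored graph. -/
lemma terminalCase (hg : GallaiColoring c) (h7 : 7 ≤ n) (hch : ChainH c f W L)
    (hWgood : W.card = 1 ∨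
      ∃ (kf : Fin 3) (A : Fin n → Finset (Fin n)),
        (∀ x ∈ W, x ∈ A x) ∧ (∀ x ∈ W, A x ⊆ W) ∧ (∀ x ∈ W, ∀ y ∈ A x, A y = A x) ∧
        (∀ x ∈ W, ∀ y ∈ W, y ∉ A x → x ≠ y ∧ c s(x, y) ≠ kf) ∧
        (∀ x ∈ W, ∀ x' ∈ A x, ∀ y ∈ W, y ∉ A x → c s(x, y) = c s(x', y)) ∧
        (∃ x ∈ W, ∃ y ∈ W, y ∉ A x) ∧
        (∀ x ∈ W, (A x).card ≤ W.card - 3)) :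
    ∃ (i j : Fin 3) (S : Finset (Fin n)), n - 1 ≤ S.card ∧
      KConn 3 ((twoColorGraph c i j).induce (↑S : Set (Fin n))) := by
  classical
  have conclude : ∀ kd : Fin 3, (badS f kd W L).card ≤ 1 →
      (∀ X : Finset (Fin n), X.card ≤ 2 →
        (∀ u ∈ (Finset.univ \ W).filter (fun u => f u ≠ kd), u ∈ X) →
        ∀ u ∈ W \ X, ∀ v ∈ W \ X, RW c kd (W \ X) u v) →
      ∃ (i j : Fin 3) (S : Finset (Fin n)), n - 1 ≤ S.card ∧
        KConn 3 ((twoColorGraph c i j).induce (↑S : Set (Fin n))) := by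
    intro kd hbad hWH
    set Dset : Finset (Fin n) := badS f kd W L with hDset
    have hDsub : Dset ⊆ Ok f kd W := Finset.filter_subset _ _
    have hkeep : ∀ v ∈ Ok f kd W, v ∉ Dset → 3 ≤ (gbSet f kd W L v).card := by
      intro v hv hvD
      by_contra hcon
      exact hvD (Finset.mem_filter.2 ⟨hv, by omega⟩)
    have hmaster := master h7 hch Dset hDsub hbad hkeep hWH
    obtain ⟨i, j, hij, hkdi, hkdj⟩ : ∃ i j : Fin 3, i ≠ j ∧ kd ≠ i ∧ kd ≠ j := by
      have : ∀ k : Fin 3, ∃ i j : Fin 3, i ≠ j ∧ k ≠ i ∧ k ≠ j := by decide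
      exact this kd
    have hScard : n - 1 ≤ (Finset.univ \ Dset).card := by
      rw [Finset.card_sdiff_of_subset (Finset.subset_univ _), Finset.card_univ, Fintype.card_fin]
      omega
    refine ⟨i, j, Finset.univ \ Dset, hScard, ?_⟩
    exact kconn_transfer hij hkdi hkdj (by omega) hmaster
  rcases hWgood with h1 | ⟨kf, A, hAmem, hAsub, hAeq, hcross, hmono, htwo, hsize⟩
  · -- |W| = 1
    obtain ⟨w, hw⟩ := Finset.card_eq_one.1 h1
    have hWH : ∀ kd : Fin 3, ∀ X : Finset (Fin n), X.card ≤ 2 →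
        (∀ u ∈ (Finset.univ \ W).filter (fun u => f u ≠ kd), u ∈ X) →
        ∀ u ∈ W \ X, ∀ v ∈ W \ X, RW c kd (W \ X) u v := by
      intro kd X _ _ u hu v hv
      have hu1 : u = w := by
        have := (Finset.mem_sdiff.1 hu).1
        rw [hw] at this
        exact Finset.mem_singleton.1 this
      have hv1 : v = w := by
        have := (Finset.mem_sdiff.1 hv).1
        rw [hw] at this
        exact Finset.mem_singleton.1 this
      rw [hu1, hv1]
      exact Relation.ReflTransGen.refl
    by_cases h0 : (badS f 0 W L).card ≤ 1
    · exact conclude 0 h0 (hWH 0)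
    by_cases hone : (badS f 1 W L).card ≤ 1
    · exact conclude 1 hone (hWH 1)
    by_cases htwo' : (badS f 2 W L).card ≤ 1
    · exact conclude 2 htwo' (hWH 2)
    · exact absurd (pigeon_aux hch (ka := 0) (kb := 1) (kc := 2) (by decide) (by decide)
        (by decide) (by omega) (by omega) (by omega)) (fun h => h)
  · -- good multipartite core
    have hW4 : 4 ≤ W.card := by
      obtain ⟨x₀, hx₀, y₀, hy₀, hy₀x₀⟩ := htwo
      have h1 := hsize x₀ hx₀
      have h2 : 0 < (A x₀).card := Finset.card_pos.2 ⟨x₀, hAmem x₀ hx₀⟩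
      omega
    obtain ⟨γ, hγkf, hγconn⟩ := folklore hAmem hAsub hAeq hcross hmono htwo
    obtain ⟨γ', hγ'kf, hγ'γ⟩ : ∃ γ' : Fin 3, γ' ≠ kf ∧ γ' ≠ γ := by
      have : ∀ a b : Fin 3, a ≠ b → ∃ t : Fin 3, t ≠ a ∧ t ≠ b := by decide
      exact this kf γ (Ne.symm hγkf)
    -- Option A : drop kf, use the full multipartite core
    have WH_A : ∀ X : Finset (Fin n), X.card ≤ 2 →
        (∀ u ∈ (Finset.univ \ W).filter (fun u => f u ≠ kf), u ∈ X) →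
        ∀ u ∈ W \ X, ∀ v ∈ W \ X, RW c kf (W \ X) u v := by
      intro X hX _ u hu v hv
      have huW := (Finset.mem_sdiff.1 hu).1
      have hvW := (Finset.mem_sdiff.1 hv).1
      by_cases huv : u = v
      · exact huv ▸ Relation.ReflTransGen.refl
      by_cases hAv : v ∈ A u
      · -- same part : step outside first
        obtain ⟨y, hy, hyA⟩ : ∃ y ∈ W \ X, y ∉ A u := by
          by_contra hcon
          push_neg at hcon
          have hsub : W \ X ⊆ A u := hcon
          have h1 := Finset.card_le_card hsub
          have h2 := Finset.card_sdiff_add_card_inter W X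
          have h3 : (W ∩ X).card ≤ X.card := Finset.card_le_card Finset.inter_subset_right
          have h4 := hsize u huW
          omega
        have hyW := (Finset.mem_sdiff.1 hy).1
        have hvy : v ∉ A y := by
          intro h
          have e1 : A v = A y := hAeq y hyW v h
          have e2 : A v = A u := hAeq u huW v hAv
          have e3 : A y = A u := by rw [← e1, e2]
          exact hyA (e3 ▸ hAmem y hyW)
        have s1 : RW c kf (W \ X) u y :=
          RW.single hu hy (hcross u huW y hyW hyA).1 (hcross u huW y hyW hyA).2
        have s2 : RW c kf (W \ X) y v :=
          RW.single hy hv (hcross y hyW v hvW hvy).1 (hcross y hyW v hvW hvy).2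
        exact s1.trans s2
      · exact RW.single hu hv (hcross u huW v hvW hAv).1 (hcross u huW v hvW hAv).2
    by_cases hbadkf : (badS f kf W L).card ≤ 1
    · exact conclude kf hbadkf WH_A
    -- now the kf-chain has ≥ 2 vertices
    have hOkf2 : 2 ≤ (Ok f kf W).card := by
      have := Finset.card_le_card (Finset.filter_subset
        (fun v => (gbSet f kf W L v).card ≤ 2) (Ok f kf W))
      rw [← badS] at this
      omega
    by_cases hbadγ' : (badS f γ' W L).card ≤ 1
    · -- Option B : drop γ', the pair {kf, γ} with the γ-connected core
      refine conclude γ' hbadγ' ?_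
      intro X hX hgX u hu v hv
      set goods : Finset (Fin n) := (Finset.univ \ W).filter (fun u => f u ≠ γ')
        with hgoods
      have hOksub : Ok f kf W ⊆ goods := by
        intro z hz
        have h1 := Finset.mem_filter.1 hz
        exact Finset.mem_filter.2 ⟨h1.1, by rw [h1.2]; exact Ne.symm hγ'kf⟩
      have hgX' : goods ⊆ X := hgX
      have hXg : X = goods := by
        refine (Finset.eq_of_subset_of_card_le hgX' ?_).symm
        have h1 := Finset.card_le_card hOksub
        omega
      have hWX : ∀ z ∈ W, z ∈ W \ X := by
        intro z hz
        refine Finset.mem_sdiff.2 ⟨hz, fun hzX => ?_⟩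
        rw [hXg] at hzX
        exact (Finset.mem_sdiff.1 (Finset.mem_filter.1 hzX).1).2 hz
      have huW := (Finset.mem_sdiff.1 hu).1
      have hvW := (Finset.mem_sdiff.1 hv).1
      have hpath := hγconn u huW v hvW
      -- convert the folklore path
      clear hu hv
      induction hpath with
      | refl => exact Relation.ReflTransGen.refl
      | tail h1 h2 ih =>
          refine (ih h2.1).tail ?_
          exact ⟨hWX _ h2.1, hWX _ h2.2.1, (hcross _ h2.1 _ h2.2.1 h2.2.2.1).1,
            by rw [h2.2.2.2]; exact Ne.symm hγ'γ⟩
    · -- Option C : drop γ ; at least 4 chain vertices avoid γ, WH is vacuous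
      have hbadγ : (badS f γ W L).card ≤ 1 := by
        by_contra hcon
        exact pigeon_aux hch (ka := kf) (kb := γ') (kc := γ) (Ne.symm hγ'kf)
          (Ne.symm hγkf) hγ'γ (by omega) (by omega) (by omega)
      refine conclude γ hbadγ ?_
      intro X hX hgX u hu v hv
      exfalso
      have hOkγ'2 : 2 ≤ (Ok f γ' W).card := by
        have := Finset.card_le_card (Finset.filter_subset
          (fun v => (gbSet f γ' W L v).card ≤ 2) (Ok f γ' W))
        rw [← badS] at this
        omega
      set goods : Finset (Fin n) := (Finset.univ \ W).filter (fun u => f u ≠ γ)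
        with hgoods
      have hsub : Ok f kf W ∪ Ok f γ' W ⊆ goods := by
        intro z hz
        rcases Finset.mem_union.1 hz with h | h
        · have h1 := Finset.mem_filter.1 h
          exact Finset.mem_filter.2 ⟨h1.1, by rw [h1.2]; exact Ne.symm hγkf⟩
        · have h1 := Finset.mem_filter.1 h
          exact Finset.mem_filter.2 ⟨h1.1, by rw [h1.2]; exact hγ'γ⟩
      have hdisj : Disjoint (Ok f kf W) (Ok f γ' W) := by
        rw [Finset.disjoint_left]
        intro z hz1 hz2
        have e1 := (Finset.mem_filter.1 hz1).2
        have e2 := (Finset.mem_filter.1 hz2).2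
        exact hγ'kf (by rw [← e1, ← e2])
      have hcard : 4 ≤ goods.card := by
        have h1 := Finset.card_union_of_disjoint hdisj
        have h2 := Finset.card_le_card hsub
        omega
      have h3 : goods ⊆ X := hgX
      have := Finset.card_le_card h3
      omega

end terminal

/-- The main recursion: peel off small component-complements until the core is
good or trivial. -/
lemma main_rec {c : Sym2 (Fin n) → Fin 3} (hg : GallaiColoring c) (h7 : 7 ≤ n) :
    ∀ m : ℕ, ∀ W : Finset (Fin n), W.card ≤ m → W.Nonempty →
      ∀ (L : List (Finset (Fin n))) (f : Fin n → Fin 3), ChainH c f W L →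
      ∃ (i j : Fin 3) (S : Finset (Fin n)), n - 1 ≤ S.card ∧
        KConn 3 ((twoColorGraph c i j).induce (↑S : Set (Fin n))) := by
  intro m
  induction m with
  | zero =>
      intro W hle hne
      have := Finset.card_pos.2 hne
      omega
  | succ m ih =>
      intro W hle hne L f hch
      by_cases h1 : W.card = 1
      · exact terminalCase hg h7 hch (Or.inl h1)
      have h2 : 2 ≤ W.card := by
        have := Finset.card_pos.2 hne
        omega
      obtain ⟨kf, A, hAmem, hAsub, hAeq, hcross, hmono, htwo⟩ := structW hg h2
      by_cases hgood : ∀ x ∈ W, (A x).card ≤ W.card - 3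
      · exact terminalCase hg h7 hch
          (Or.inr ⟨kf, A, hAmem, hAsub, hAeq, hcross, hmono, htwo, hgood⟩)
      push_neg at hgood
      obtain ⟨xb, hxb, hbig⟩ := hgood
      set B : Finset (Fin n) := A xb with hB
      set R : Finset (Fin n) := W \ B with hR
      have hBW : B ⊆ W := hAsub xb hxb
      have hxbB : xb ∈ B := hAmem xb hxb
      have hRne : R.Nonempty := by
        obtain ⟨x₀, hx₀, y₀, hy₀, hy₀x₀⟩ := htwo
        by_cases h : y₀ ∈ B
        · refine ⟨x₀, Finset.mem_sdiff.2 ⟨hx₀, fun hx₀B => ?_⟩⟩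
          have e1 : A x₀ = B := hAeq xb hxb x₀ hx₀B
          exact hy₀x₀ (by rw [e1]; exact h)
        · exact ⟨y₀, Finset.mem_sdiff.2 ⟨hy₀, h⟩⟩
      have hRcard : R.card ≤ 2 := by
        rw [hR, Finset.card_sdiff_of_subset hBW]
        omega
      have hBcard : B.card < W.card := by
        have h3 := Finset.card_le_card hBW
        have h4 : R.card = W.card - B.card := by rw [hR, Finset.card_sdiff_of_subset hBW]
        have h5 : 0 < R.card := Finset.card_pos.2 hRne
        omega
      set f' : Fin n → Fin 3 := fun v => if v ∈ R then c s(v, xb) else f v with hf'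
      have hch' : ChainH c f' B (R :: L) := by
        refine ⟨?_, ?_, ?_⟩
        · intro i hi o ho x hx
          rcases Nat.eq_zero_or_pos i with rfl | hipos
          · rw [List.getD_cons_zero] at ho
            have hoW : o ∈ W := (Finset.mem_sdiff.1 ho).1
            have hoB : o ∉ B := (Finset.mem_sdiff.1 ho).2
            have hxB : x ∈ B := by
              rcases hx with h | ⟨j, hj, _⟩
              · exact h
              · omega
            have hxW : x ∈ W := hBW hxB
            have hne2 : x ≠ o := (hcross x hxW o hoW (by
                intro h
                refine hoB ?_
                rw [hB, ← hAeq xb hxb x hxB]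
                exact h)).1
            have hcol : c s(xb, o) = c s(x, o) := hmono xb hxb x hxB o hoW hoB
            have hfo : f' o = c s(o, xb) := by rw [hf']; simp only []; rw [if_pos ho]
            refine ⟨Ne.symm hne2, ?_⟩
            rw [hfo, Sym2.eq_swap (a := o) (b := x), ← hcol,
              Sym2.eq_swap (a := xb) (b := o)]
          · obtain ⟨i', rfl⟩ := Nat.exists_eq_succ_of_ne_zero (Nat.pos_iff_ne_zero.1 hipos)
            rw [List.getD_cons_succ] at ho
            have hi' : i' < L.length := by
              simp only [List.length_cons] at hi
              omega
            have hoW : o ∉ W := chain_not_W hch hi' ho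
            have hoR : o ∉ R := fun h => hoW ((Finset.mem_sdiff.1 h).1)
            have hfo : f' o = f o := by rw [hf']; simp only []; rw [if_neg hoR]
            have hx' : x ∈ W ∨ ∃ j : ℕ, j < i' ∧ x ∈ L.getD j ∅ := by
              rcases hx with h | ⟨j, hj, hxj⟩
              · exact Or.inl (hBW h)
              · rcases Nat.eq_zero_or_pos j with rfl | hjpos
                · rw [List.getD_cons_zero] at hxj
                  exact Or.inl ((Finset.mem_sdiff.1 hxj).1)
                · obtain ⟨j', rfl⟩ :=
                    Nat.exists_eq_succ_of_ne_zero (Nat.pos_iff_ne_zero.1 hjpos)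
                  rw [List.getD_cons_succ] at hxj
                  exact Or.inr ⟨j', by omega, hxj⟩
            rw [hfo]
            exact hch.1 i' hi' o ho x hx'
        · intro R' hR'
          rcases List.mem_cons.1 hR' with rfl | h
          · exact hRcard
          · exact hch.2.1 R' h
        · intro x
          by_cases hxB : x ∈ B
          · exact Or.inl hxB
          by_cases hxW : x ∈ W
          · exact Or.inr ⟨0, by simp, by
              rw [List.getD_cons_zero]
              exact Finset.mem_sdiff.2 ⟨hxW, hxB⟩⟩
          · obtain ⟨i, hi, hmem⟩ := (hch.2.2 x).resolve_left hxW
            exact Or.inr ⟨i + 1, by simp only [List.length_cons]; omega,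
              by rw [List.getD_cons_succ]; exact hmem⟩
      exact ih B (by omega) ⟨xb, hxbB⟩ (R :: L) f' hch'

end Stmt6

/-- For `n ≥ 7`, every Gallai-3-coloring of `Kₙ` has a 3-connected subgraph on
at least `n−1` vertices using at most two colors. -/
theorem stmt_6 (n : ℕ) (hn : 7 ≤ n) (c : Sym2 (Fin n) → Fin 3)
    (hg : GallaiColoring c) :
    ∃ (i j : Fin 3) (S : Finset (Fin n)), n - 1 ≤ S.card ∧
      KConn 3 ((twoColorGraph c i j).induce (↑S : Set (Fin n))) := by
  have hch : Stmt6.ChainH c (fun _ => 0) Finset.univ [] := by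
    refine ⟨?_, ?_, ?_⟩
    · intro i hi
      simp at hi
    · intro R hR
      simp at hR
    · intro x
      exact Or.inl (Finset.mem_univ x)
  have hne : (Finset.univ : Finset (Fin n)).Nonempty :=
    ⟨⟨0, by omega⟩, Finset.mem_univ _⟩
  exact Stmt6.main_rec hg hn n Finset.univ
    (by rw [Finset.card_univ, Fintype.card_fin]) hne [] _ hch
end

section
/- For every positive integer t and every n ≥ 6t, there exists a Gallai-coloring of K_n with 3 colors such that no subgraph on at least n − 2t + 1 vertices that uses at most two colors is 4t-connected. Consequently, for k = 4t the bound n − ⌊(k−1)/2⌋ in the two-colored k-connected subgraph problem cannot be achieved. -/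
open Finset SimpleGraph

/-! ### Auxiliary construction -/

set_option maxHeartbeats 1000000

def matched (x y : ℕ) : Prop := (y = x + 1 ∧ x % 2 = 0) ∨ (x = y + 1 ∧ y % 2 = 0)

instance : ∀ x y, Decidable (matched x y) := fun x y => by unfold matched; infer_instance

def fadj (t x y : ℕ) : Prop :=
  (x < 2*t ∧ 2*t ≤ y ∧ y < 4*t ∧ y ≠ x + 2*t) ∨
  (y < 2*t ∧ 2*t ≤ x ∧ x < 4*t ∧ x ≠ y + 2*t) ∨
  (x < 2*t ∧ y < 2*t ∧ matched x y)

instance : ∀ t x y, Decidable (fadj t x y) := fun t x y => by unfold fadj; infer_instance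

def mate (x : ℕ) : ℕ := if x % 2 = 0 then x + 1 else x - 1

def col (t x y : ℕ) : Fin 3 :=
  if (4*t ≤ min x y ∧ min x y < 6*t) ∨ (4*t ≤ max x y ∧ max x y < 6*t) then 2
  else if 6*t ≤ min x y then 2
  else if 6*t ≤ max x y then (if min x y < 2*t then 0 else 1)
  else if fadj t (min x y) (max x y) then 0 else 1

lemma col_comm (t x y : ℕ) : col t x y = col t y x := by
  unfold col; rw [min_comm, max_comm]

lemma col_C {t x : ℕ} (h1 : 4*t ≤ x) (h2 : x < 6*t) (y : ℕ) : col t x y = 2 := by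
  unfold col; split_ifs <;> first | rfl | (exfalso; omega)

lemma col_D2 {t x y : ℕ} (hx : 6*t ≤ x) (hy : 6*t ≤ y) : col t x y = 2 := by
  unfold col; split_ifs <;> first | rfl | (exfalso; omega)

lemma col_D {t x y : ℕ} (hx : 6*t ≤ x) (hy : y < 4*t) :
    col t x y = if y < 2*t then 0 else 1 := by
  unfold col; split_ifs <;> first | rfl | (exfalso; omega)

lemma col_01 {t x y : ℕ} (hx : x < 4*t ∨ 6*t ≤ x) (hy : y < 4*t ∨ 6*t ≤ y)
    (hn : ¬(6*t ≤ x ∧ 6*t ≤ y)) : col t x y = 0 ∨ col t x y = 1 := by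
  unfold col; split_ifs <;> first | (left; rfl) | (right; rfl) | (exfalso; omega)

lemma col_B0 {t x y : ℕ} (hx1 : 2*t ≤ x) (hx2 : x < 4*t) (h : col t x y = 0) :
    y < 2*t ∧ y + 2*t ≠ x := by
  unfold col at h
  split_ifs at h <;> first | exact absurd h (by decide) | omega |
    (unfold fadj matched at *; omega)

lemma col_B2 {t x y : ℕ} (hx1 : 2*t ≤ x) (hx2 : x < 4*t) (h : col t x y = 2) :
    4*t ≤ y ∧ y < 6*t := by
  unfold col at h
  split_ifs at h <;> first | exact absurd h (by decide) | omega |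
    (unfold fadj matched at *; omega)

lemma col_A1 {t x y : ℕ} (hx : x < 2*t) (hne : y ≠ x) (h : col t x y = 1) :
    (y < 2*t ∧ y ≠ x ∧ y ≠ mate x) ∨ y = x + 2*t := by
  unfold col at h
  split_ifs at h <;>
    first | exact absurd h (by decide) | (unfold mate; split_ifs <;> omega) |
      (unfold fadj matched at *; unfold mate; split_ifs <;> omega)

lemma col_A2 {t x y : ℕ} (hx : x < 2*t) (h : col t x y = 2) :
    4*t ≤ y ∧ y < 6*t := by
  unfold col at h
  split_ifs at h <;> first | exact absurd h (by decide) | omega |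
    (unfold fadj matched at *; omega)

lemma col_v0 {t : ℕ} (ht : 1 ≤ t) : col t 0 1 = 0 := by
  unfold col; split_ifs <;> first | rfl | (exfalso; omega) |
    (unfold fadj matched at *; exfalso; omega)

lemma col_v1 {t : ℕ} (ht : 1 ≤ t) : col t 0 (2*t) = 1 := by
  unfold col; split_ifs <;> first | rfl | (exfalso; omega) |
    (unfold fadj matched at *; exfalso; omega)

lemma col_v2 {t : ℕ} (ht : 1 ≤ t) : col t 0 (4*t) = 2 := by
  unfold col; split_ifs <;> first | rfl | (exfalso; omega) |
    (unfold fadj matched at *; exfalso; omega)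

lemma col_pigeon {t a b d : ℕ}
    (ha : a < 4*t ∨ 6*t ≤ a) (hb : b < 4*t ∨ 6*t ≤ b) (hd : d < 4*t ∨ 6*t ≤ d)
    (hab : ¬(6*t ≤ a ∧ 6*t ≤ b)) (hbd : ¬(6*t ≤ b ∧ 6*t ≤ d))
    (had : ¬(6*t ≤ a ∧ 6*t ≤ d))
    (h1 : col t a b ≠ col t b d) (h2 : col t b d ≠ col t a d)
    (h3 : col t a b ≠ col t a d) : False := by
  have a1 := col_01 ha hb hab
  have a2 := col_01 hb hd hbd
  have a3 := col_01 ha hd had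
  rcases a1 with a1 | a1 <;> rcases a2 with a2 | a2 <;> rcases a3 with a3 | a3 <;>
    first
      | exact h1 (a1.trans a2.symm)
      | exact h2 (a2.trans a3.symm)
      | exact h3 (a1.trans a3.symm)

/-- The Gallai 3-coloring used in the construction. -/
def myc (t n : ℕ) : Sym2 (Fin n) → Fin 3 :=
  Sym2.lift ⟨fun x y => col t x.val y.val, fun x y => col_comm t x.val y.val⟩

lemma myc_eq {t n : ℕ} (x y : Fin n) : myc t n s(x, y) = col t x.val y.val := rfl

lemma adj_two {t n : ℕ} {i j : Fin 3} {x y : Fin n}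
    (h : (twoColorGraph (myc t n) i j).Adj x y) :
    x ≠ y ∧ (col t x.val y.val = i ∨ col t x.val y.val = j) := by
  rw [twoColorGraph, SimpleGraph.fromRel_adj] at h
  obtain ⟨hne, h2⟩ := h
  refine ⟨hne, ?_⟩
  rcases h2 with h | h
  · exact h
  · rw [Sym2.eq_swap] at h
    exact h

lemma no_edge_reachable {V : Type*} {G : SimpleGraph V} {a b : V}
    (h : G.Reachable a b) (hna : ∀ x, ¬ G.Adj a x) : a = b := by
  obtain ⟨p⟩ := h
  cases p with
  | nil => rfl
  | cons h' q => exact absurd h' (hna _)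

lemma key {n k : ℕ} (G : SimpleGraph (Fin n)) (S : Finset (Fin n))
    (u : Fin n) (hu : u ∈ S) (N : Finset (Fin n)) (huN : u ∉ N) (hN : N.card < k)
    (hnbr : ∀ w, G.Adj u w → w ∈ N) (hbig : k + 1 ≤ S.card) :
    ¬ KConn k (G.induce (↑S : Set (Fin n))) := by
  classical
  rintro ⟨-, hconn⟩
  set s : Finset ((↑S : Set (Fin n))) :=
    Finset.univ.filter (fun x => (x : Fin n) ∈ N) with hs
  have hsc : s.card ≤ N.card :=
    Finset.card_le_card_of_injOn (fun x => (x : Fin n))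
      (fun a ha => (Finset.mem_filter.mp ha).2)
      (fun a _ b _ h => Subtype.ext h)
  have hvex : ∃ v, v ∈ S ∧ v ∉ N ∧ v ≠ u := by
    have h2 : (insert u N).card ≤ k := by
      have := Finset.card_insert_le u N; omega
    have h3 := Finset.le_card_sdiff (insert u N) S
    have h4 : (S \ insert u N).Nonempty := by
      rw [← Finset.card_pos]; omega
    obtain ⟨v, hv⟩ := h4
    rw [Finset.mem_sdiff, Finset.mem_insert] at hv
    push_neg at hv
    exact ⟨v, hv.1, hv.2.2, hv.2.1⟩
  obtain ⟨v, hvS, hvN, hvu⟩ := hvex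
  have hcon := hconn s (lt_of_le_of_lt hsc hN)
  have hu' : u ∈ (↑S : Set (Fin n)) := hu
  have hv' : v ∈ (↑S : Set (Fin n)) := hvS
  have hus : (⟨u, hu'⟩ : (↑S : Set (Fin n))) ∈ ((↑s : Set (↑S : Set (Fin n))))ᶜ := by
    simp [hs, huN]
  have hvs : (⟨v, hv'⟩ : (↑S : Set (Fin n))) ∈ ((↑s : Set (↑S : Set (Fin n))))ᶜ := by
    simp [hs, hvN]
  have hreach := hcon.preconnected ⟨⟨u, hu'⟩, hus⟩ ⟨⟨v, hv'⟩, hvs⟩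
  have hna : ∀ x, ¬ ((G.induce (↑S : Set (Fin n))).induce
      ((↑s : Set (↑S : Set (Fin n)))ᶜ)).Adj ⟨⟨u, hu'⟩, hus⟩ x := by
    intro x hx
    have hadj : G.Adj u ((x : (↑S : Set (Fin n))) : Fin n) := hx
    have hxN := hnbr _ hadj
    have hxs : (x : (↑S : Set (Fin n))) ∈ s :=
      Finset.mem_filter.mpr ⟨Finset.mem_univ _, hxN⟩
    exact x.2 hxs
  have := no_edge_reachable hreach hna
  exact hvu (congrArg (fun z : ((↑s : Set (↑S : Set (Fin n)))ᶜ : Set _) =>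
    ((z : (↑S : Set (Fin n))) : Fin n)) this).symm

lemma hit {n : ℕ} (S R : Finset (Fin n)) (h : n < S.card + R.card) :
    ∃ u, u ∈ S ∧ u ∈ R := by
  by_contra hcon
  push_neg at hcon
  have hdis : Disjoint S R := Finset.disjoint_left.mpr hcon
  have h1 : (S ∪ R).card = S.card + R.card := Finset.card_union_of_disjoint hdis
  have h2 : (S ∪ R).card ≤ n := by
    have := Finset.card_le_univ (S ∪ R)
    simpa using this
  omega

lemma caseC {t n : ℕ} (ht : 1 ≤ t) (hn : 6*t ≤ n) (i j : Fin 3)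
    (hi : i ≠ 2) (hj : j ≠ 2) (S : Finset (Fin n)) (hS : n - 2*t + 1 ≤ S.card) :
    ¬ KConn (4*t) ((twoColorGraph (myc t n) i j).induce (↑S : Set (Fin n))) := by
  obtain ⟨u, huS, huR⟩ := hit S ((Finset.Ico (4*t) (6*t)).attachFin
    (fun m hm => by rw [Finset.mem_Ico] at hm; omega))
    (by rw [Finset.card_attachFin, Nat.card_Ico]; omega)
  rw [Finset.mem_attachFin, Finset.mem_Ico] at huR
  refine key _ S u huS ∅ (Finset.notMem_empty u)
    (by rw [Finset.card_empty]; omega) ?_ (by omega)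
  intro w hw
  obtain ⟨hne, hcol⟩ := adj_two hw
  have h2 := col_C huR.1 huR.2 w.val
  rcases hcol with h | h
  · exact absurd (h.symm.trans h2) hi
  · exact absurd (h.symm.trans h2) hj

lemma caseB {t n : ℕ} (ht : 1 ≤ t) (hn : 6*t ≤ n) (i j : Fin 3)
    (hi : i ≠ 1) (hj : j ≠ 1) (S : Finset (Fin n)) (hS : n - 2*t + 1 ≤ S.card) :
    ¬ KConn (4*t) ((twoColorGraph (myc t n) i j).induce (↑S : Set (Fin n))) := by
  obtain ⟨u, huS, huR⟩ := hit S ((Finset.Ico (2*t) (4*t)).attachFin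
    (fun m hm => by rw [Finset.mem_Ico] at hm; omega))
    (by rw [Finset.card_attachFin, Nat.card_Ico]; omega)
  rw [Finset.mem_attachFin, Finset.mem_Ico] at huR
  have hub : ∀ m ∈ (Finset.Ico 0 (2*t) \ {u.val - 2*t}) ∪ Finset.Ico (4*t) (6*t),
      m < n := by
    intro m hm
    simp only [Finset.mem_union, Finset.mem_sdiff, Finset.mem_Ico,
      Finset.mem_singleton] at hm
    omega
  refine key _ S u huS (Finset.attachFin _ hub) ?_ ?_ ?_ (by omega)
  · rw [Finset.mem_attachFin]
    simp only [Finset.mem_union, Finset.mem_sdiff, Finset.mem_Ico,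
      Finset.mem_singleton]
    omega
  · rw [Finset.card_attachFin]
    have h1 : ({u.val - 2*t} : Finset ℕ) ⊆ Finset.Ico 0 (2*t) := by
      intro m hm
      rw [Finset.mem_singleton] at hm
      rw [Finset.mem_Ico]
      omega
    have h2 := Finset.card_sdiff_of_subset h1
    have h3 := Finset.card_union_le (Finset.Ico 0 (2*t) \ {u.val - 2*t})
      (Finset.Ico (4*t) (6*t))
    rw [Finset.card_singleton, Nat.card_Ico] at h2
    rw [Nat.card_Ico] at h3
    omega
  · intro w hw
    obtain ⟨hne, hcol⟩ := adj_two hw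
    have h02 : col t u.val w.val = 0 ∨ col t u.val w.val = 2 := by
      have htri : ∀ z : Fin 3, z ≠ 1 → z = 0 ∨ z = 2 := by decide
      rcases hcol with h | h
      · exact htri _ (by rw [h]; exact hi)
      · exact htri _ (by rw [h]; exact hj)
    rw [Finset.mem_attachFin]
    simp only [Finset.mem_union, Finset.mem_sdiff, Finset.mem_Ico,
      Finset.mem_singleton]
    rcases h02 with h | h
    · have := col_B0 huR.1 huR.2 h
      left
      omega
    · have := col_B2 huR.1 huR.2 h
      right
      omega

lemma caseA_s7 {t n : ℕ} (ht : 1 ≤ t) (hn : 6*t ≤ n) (i j : Fin 3)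
    (hi : i ≠ 0) (hj : j ≠ 0) (S : Finset (Fin n)) (hS : n - 2*t + 1 ≤ S.card) :
    ¬ KConn (4*t) ((twoColorGraph (myc t n) i j).induce (↑S : Set (Fin n))) := by
  obtain ⟨u, huS, huR⟩ := hit S ((Finset.Ico 0 (2*t)).attachFin
    (fun m hm => by rw [Finset.mem_Ico] at hm; omega))
    (by rw [Finset.card_attachFin, Nat.card_Ico]; omega)
  rw [Finset.mem_attachFin, Finset.mem_Ico] at huR
  have hmlt : mate u.val < 2*t ∧ u.val ≠ mate u.val := by
    unfold mate; split_ifs <;> omega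
  have hub : ∀ m ∈ ((Finset.Ico 0 (2*t) \ {u.val, mate u.val}) ∪ {u.val + 2*t})
      ∪ Finset.Ico (4*t) (6*t), m < n := by
    intro m hm
    simp only [Finset.mem_union, Finset.mem_sdiff, Finset.mem_Ico,
      Finset.mem_insert, Finset.mem_singleton] at hm
    omega
  refine key _ S u huS (Finset.attachFin _ hub) ?_ ?_ ?_ (by omega)
  · rw [Finset.mem_attachFin]
    simp only [Finset.mem_union, Finset.mem_sdiff, Finset.mem_Ico,
      Finset.mem_insert, Finset.mem_singleton, true_or, not_true, false_and,
      and_false, false_or]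
    omega
  · rw [Finset.card_attachFin]
    have h1 : ({u.val, mate u.val} : Finset ℕ) ⊆ Finset.Ico 0 (2*t) := by
      intro m hm
      rw [Finset.mem_insert, Finset.mem_singleton] at hm
      rw [Finset.mem_Ico]
      rcases hm with h | h <;> omega
    have h2 := Finset.card_sdiff_of_subset h1
    have hpair : ({u.val, mate u.val} : Finset ℕ).card = 2 := by
      rw [Finset.card_insert_of_notMem (by rw [Finset.mem_singleton]; exact hmlt.2),
        Finset.card_singleton]
    have h3 := Finset.card_union_le (Finset.Ico 0 (2*t) \ {u.val, mate u.val})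
      ({u.val + 2*t} : Finset ℕ)
    have h4 := Finset.card_union_le
      ((Finset.Ico 0 (2*t) \ {u.val, mate u.val}) ∪ {u.val + 2*t})
      (Finset.Ico (4*t) (6*t))
    rw [Nat.card_Ico, hpair] at h2
    rw [Finset.card_singleton] at h3
    rw [Nat.card_Ico] at h4
    omega
  · intro w hw
    obtain ⟨hne, hcol⟩ := adj_two hw
    have h12 : col t u.val w.val = 1 ∨ col t u.val w.val = 2 := by
      have htri : ∀ z : Fin 3, z ≠ 0 → z = 1 ∨ z = 2 := by decide
      rcases hcol with h | h
      · exact htri _ (by rw [h]; exact hi)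
      · exact htri _ (by rw [h]; exact hj)
    rw [Finset.mem_attachFin]
    simp only [Finset.mem_union, Finset.mem_sdiff, Finset.mem_Ico,
      Finset.mem_insert, Finset.mem_singleton]
    rcases h12 with h | h
    · have hwv : w.val ≠ u.val := fun hh => hne ((Fin.val_injective hh).symm)
      have := col_A1 huR.2 hwv h
      omega
    · have := col_A2 huR.2 h
      right
      omega

/-- For every `t ≥ 1` and `n ≥ 6t` there is a Gallai-3-coloring of `Kₙ` with no
`4t`-connected subgraph on at least `n − 2t + 1` vertices using at most two colors. -/
theorem stmt_7 (t n : ℕ) (ht : 1 ≤ t) (hn : 6 * t ≤ n) :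
    ∃ c : Sym2 (Fin n) → Fin 3, UsesAll c ∧ GallaiColoring c ∧
      ∀ (i j : Fin 3) (S : Finset (Fin n)), n - 2 * t + 1 ≤ S.card →
        ¬ KConn (4 * t) ((twoColorGraph c i j).induce (↑S : Set (Fin n))) := by
  have hn' : 6*t ≤ n := by omega
  refine ⟨myc t n, ?_, ?_, ?_⟩
  · intro i
    fin_cases i
    · exact ⟨⟨0, by omega⟩, ⟨1, by omega⟩,
        by simp only [ne_eq, Fin.mk.injEq]; omega, col_v0 ht⟩
    · exact ⟨⟨0, by omega⟩, ⟨2*t, by omega⟩,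
        by simp only [ne_eq, Fin.mk.injEq]; omega, col_v1 ht⟩
    · exact ⟨⟨0, by omega⟩, ⟨4*t, by omega⟩,
        by simp only [ne_eq, Fin.mk.injEq]; omega, col_v2 ht⟩
  · rintro ⟨u, v, w, huv, hvw, huw, h1, h2, h3⟩
    simp only [myc_eq] at h1 h2 h3
    by_cases hu3 : 4*t ≤ u.val ∧ u.val < 6*t
    · exact h3 ((col_C hu3.1 hu3.2 v.val).trans (col_C hu3.1 hu3.2 w.val).symm)
    by_cases hv3 : 4*t ≤ v.val ∧ v.val < 6*t
    · refine h1 ?_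
      rw [col_comm]
      exact (col_C hv3.1 hv3.2 u.val).trans (col_C hv3.1 hv3.2 w.val).symm
    by_cases hw3 : 4*t ≤ w.val ∧ w.val < 6*t
    · refine h2 ?_
      rw [col_comm t v.val w.val, col_comm t u.val w.val]
      exact (col_C hw3.1 hw3.2 v.val).trans (col_C hw3.1 hw3.2 u.val).symm
    push_neg at hu3 hv3 hw3
    by_cases hu1 : 6*t ≤ u.val <;> by_cases hv1 : 6*t ≤ v.val <;>
      by_cases hw1 : 6*t ≤ w.val
    · exact h1 ((col_D2 hu1 hv1).trans (col_D2 hv1 hw1).symm)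
    · have hw4 : w.val < 4*t := by omega
      exact h2 ((col_D hv1 hw4).trans (col_D hu1 hw4).symm)
    · have hv4 : v.val < 4*t := by omega
      refine h1 ((col_D hu1 hv4).trans ?_)
      rw [col_comm]
      exact (col_D hw1 hv4).symm
    · exact col_pigeon (t := t) (by omega) (by omega) (by omega)
        (by omega) (by omega) (by omega) h1 h2 h3
    · have hu4 : u.val < 4*t := by omega
      refine h3 ?_
      rw [col_comm t u.val v.val, col_comm t u.val w.val]
      exact (col_D hv1 hu4).trans (col_D hw1 hu4).symm
    · exact col_pigeon (t := t) (by omega) (by omega) (by omega)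
        (by omega) (by omega) (by omega) h1 h2 h3
    · exact col_pigeon (t := t) (by omega) (by omega) (by omega)
        (by omega) (by omega) (by omega) h1 h2 h3
    · exact col_pigeon (t := t) (by omega) (by omega) (by omega)
        (by omega) (by omega) (by omega) h1 h2 h3
  · intro i j S hS
    have hS' : n - 2*t + 1 ≤ S.card := by omega
    fin_cases i <;> fin_cases j
    · exact caseB ht hn' _ _ (by decide) (by decide) S hS'
    · exact caseC ht hn' _ _ (by decide) (by decide) S hS'
    · exact caseB ht hn' _ _ (by decide) (by decide) S hS'
    · exact caseC ht hn' _ _ (by decide) (by decide) S hS'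
    · exact caseA_s7 ht hn' _ _ (by decide) (by decide) S hS'
    · exact caseA_s7 ht hn' _ _ (by decide) (by decide) S hS'
    · exact caseB ht hn' _ _ (by decide) (by decide) S hS'
    · exact caseA_s7 ht hn' _ _ (by decide) (by decide) S hS'
    · exact caseA_s7 ht hn' _ _ (by decide) (by decide) S hS'
end

section
/- Let k ≥ 1 and m ≥ k + 4, and let s, t ≥ m − 1. Then every edge-coloring of the complete bipartite graph K_{s,t} using exactly m colors that contains no rainbow K_{1,3} has a spanning k-connected monochromatic subgraph. -/
open Finset SimpleGraph

/-- The claw `K_{1,3}` on 4 vertices with center `0`. -/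
def claw : SimpleGraph (Fin 4) := SimpleGraph.fromRel fun x _ => x = 0

/-- Two disjoint paths on 3 vertices. -/
def twoP3 : SimpleGraph (Fin 3 ⊕ Fin 3) :=
  disjUnion' (SimpleGraph.pathGraph 3) (SimpleGraph.pathGraph 3)

lemma image_card_le_two {α β : Type*} [Fintype α] [DecidableEq β] (f : α → β)
    (h : ∀ a b c : α, f a ≠ f b → f a ≠ f c → f b ≠ f c → False) :
    (Finset.univ.image f).card ≤ 2 := by
  by_contra hc
  push_neg at hc
  obtain ⟨x, y, z, hx, hy, hz, hxy, hxz, hyz⟩ := Finset.two_lt_card_iff.mp hc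
  obtain ⟨a, -, ha⟩ := Finset.mem_image.mp hx
  obtain ⟨b, -, hb⟩ := Finset.mem_image.mp hy
  obtain ⟨e, -, he⟩ := Finset.mem_image.mp hz
  exact h a b e (by rw [ha, hb]; exact hxy) (by rw [ha, he]; exact hxz)
    (by rw [hb, he]; exact hyz)

lemma claw_copy' {V α : Type*} (B : SimpleGraph V) (c : Sym2 V → α) (x : V) (y : Fin 3 → V)
    (hadj : ∀ j, B.Adj x (y j))
    (hcol : ∀ j j', c s(x, y j) = c s(x, y j') → j = j') :
    RainbowCopy claw B c := by
  have key : ∀ p q : Fin 4, ∀ (hp : p ≠ 0) (hq : q ≠ 0),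
      c s(x, (Fin.cons x y : Fin 4 → V) p) = c s(x, (Fin.cons x y : Fin 4 → V) q) → p = q := by
    intro p q hp hq hpq
    rw [← Fin.succ_pred p hp, ← Fin.succ_pred q hq, Fin.cons_succ, Fin.cons_succ] at hpq
    have := hcol _ _ hpq
    rw [← Fin.succ_pred p hp, ← Fin.succ_pred q hq, this]
  refine ⟨(Fin.cons x y : Fin 4 → V), ?_, ?_, ?_⟩
  · rw [Fin.cons_injective_iff]
    constructor
    · rintro ⟨j, hj⟩
      exact B.irrefl (hj ▸ hadj j)
    · intro j j' h
      exact hcol j j' (by rw [h])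
  · intro a b hab
    simp only [claw, fromRel_adj] at hab
    obtain ⟨hne, h0 | h0⟩ := hab
    · subst h0
      rw [Fin.cons_zero, ← Fin.succ_pred b (Ne.symm hne), Fin.cons_succ]
      exact hadj _
    · subst h0
      rw [Fin.cons_zero, ← Fin.succ_pred a hne, Fin.cons_succ]
      exact (hadj _).symm
  · intro a b a' b' hab hab' hcc
    simp only [claw, fromRel_adj] at hab hab'
    obtain ⟨hne, rfl | rfl⟩ := hab <;> obtain ⟨hne', rfl | rfl⟩ := hab'
    · rw [Fin.cons_zero] at hcc
      rw [key b b' (Ne.symm hne) (Ne.symm hne') hcc]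
    · rw [Fin.cons_zero, Sym2.eq_swap (a := (Fin.cons x y : Fin 4 → V) a') (b := x)] at hcc
      rw [key b a' (Ne.symm hne) hne' hcc]
      exact Sym2.eq_swap
    · rw [Fin.cons_zero, Sym2.eq_swap (a := (Fin.cons x y : Fin 4 → V) a) (b := x)] at hcc
      rw [key a b' hne (Ne.symm hne') hcc]
      exact Sym2.eq_swap
    · rw [Fin.cons_zero, Sym2.eq_swap (a := (Fin.cons x y : Fin 4 → V) a) (b := x),
        Sym2.eq_swap (a := (Fin.cons x y : Fin 4 → V) a') (b := x)] at hcc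
      rw [key a a' hne hne' hcc]

lemma bip_main {k m s t : ℕ} (hk : 1 ≤ k) (hm : k + 4 ≤ m)
    (hs : m - 1 ≤ s) (ht : m - 1 ≤ t)
    (d : Fin s → Fin t → Fin m)
    (hL : ∀ u w1 w2 w3, d u w1 ≠ d u w2 → d u w1 ≠ d u w3 → d u w2 ≠ d u w3 → False)
    (hR : ∀ w u1 u2 u3, d u1 w ≠ d u2 w → d u1 w ≠ d u3 w → d u2 w ≠ d u3 w → False)
    (hall : ∀ i : Fin m, ∃ u w, d u w = i) :
    ∃ c1 : Fin m, (∀ u, ∃ w, d u w = c1) ∧ (∀ w, ∃ u, d u w = c1) := by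
  classical
  have hm5 : 5 ≤ m := by omega
  have hs1 : 0 < s := by omega
  have ht1 : 0 < t := by omega
  -- a common-on-left color is common on the right too
  have upgrade : ∀ c1 : Fin m, (∀ u, ∃ w, d u w = c1) → (∀ w, ∃ u, d u w = c1) := by
    intro c1 PL
    by_contra hbad
    push_neg at hbad
    obtain ⟨w0, hw0⟩ := hbad
    have uniqL : ∀ u w w', d u w ≠ c1 → d u w' ≠ c1 → d u w = d u w' := by
      intro u w w' h1 h2
      by_contra hne
      obtain ⟨wc, hwc⟩ := PL u
      exact hL u wc w w' (by rw [hwc]; exact Ne.symm h1) (by rw [hwc]; exact Ne.symm h2) hne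
    have hcov : (Finset.univ : Finset (Fin m)) ⊆
        insert c1 (Finset.univ.image (fun u => d u w0)) := by
      intro i _
      obtain ⟨u, w, hw⟩ := hall i
      by_cases hic : i = c1
      · simp [hic]
      · have heq : d u w = d u w0 := uniqL u w w0 (by rw [hw]; exact hic) (hw0 u)
        rw [Finset.mem_insert]
        right
        rw [Finset.mem_image]
        exact ⟨u, Finset.mem_univ u, by rw [← heq, hw]⟩
    have h1 : (Finset.univ.image (fun u => d u w0)).card ≤ 2 :=
      image_card_le_two _ (fun a b e => hR w0 a b e)
    have h2 := Finset.card_le_card hcov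
    rw [Finset.card_univ, Fintype.card_fin] at h2
    have h3 := Finset.card_insert_le c1 (Finset.univ.image (fun u => d u w0))
    omega
  by_cases hdisj : ∃ u u' : Fin s, ∀ w w' : Fin t, d u w ≠ d u' w'
  · exfalso
    obtain ⟨u, u', hd⟩ := hdisj
    have hcov : (Finset.univ : Finset (Fin m)) ⊆
        (Finset.univ.image (d u)) ∪ (Finset.univ.image (d u')) := by
      intro i _
      obtain ⟨u'', w'', hw⟩ := hall i
      rw [Finset.mem_union, Finset.mem_image, Finset.mem_image]
      by_cases h1 : d u'' w'' = d u w''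
      · exact Or.inl ⟨w'', Finset.mem_univ _, by rw [← h1, hw]⟩
      by_cases h2 : d u'' w'' = d u' w''
      · exact Or.inr ⟨w'', Finset.mem_univ _, by rw [← h2, hw]⟩
      exact absurd (hR w'' u u' u'' (hd w'' w'') (fun h => h1 h.symm) (fun h => h2 h.symm))
        not_false
    have c1 := image_card_le_two (d u) (hL u)
    have c2 := image_card_le_two (d u') (hL u')
    have h2 := Finset.card_le_card hcov
    have h3 := Finset.card_union_le (Finset.univ.image (d u)) (Finset.univ.image (d u'))
    rw [Finset.card_univ, Fintype.card_fin] at h2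
    omega
  push_neg at hdisj
  set u0 : Fin s := ⟨0, hs1⟩ with hu0def
  set w00 : Fin t := ⟨0, ht1⟩ with hw00def
  set a : Fin m := d u0 w00 with hadef
  by_cases hbex : ∃ w, d u0 w ≠ a
  case neg =>
    push_neg at hbex
    have PLa : ∀ u, ∃ w, d u w = a := by
      intro u
      obtain ⟨w, w', h⟩ := hdisj u u0
      exact ⟨w, by rw [h, hbex w']⟩
    exact ⟨a, PLa, upgrade a PLa⟩
  obtain ⟨wb, hwb⟩ := hbex
  set b : Fin m := d u0 wb with hbdef
  have hab : ∀ w, d u0 w = a ∨ d u0 w = b := by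
    intro w
    by_contra h
    push_neg at h
    exact hL u0 w00 wb w (fun h' => hwb h'.symm) (Ne.symm h.1) (Ne.symm h.2)
  by_cases hA : ∀ u, ∃ w, d u w = a
  · exact ⟨a, hA, upgrade a hA⟩
  by_cases hB : ∀ u, ∃ w, d u w = b
  · exact ⟨b, hB, upgrade b hB⟩
  exfalso
  push_neg at hA
  push_neg at hB
  obtain ⟨u1, hu1⟩ := hA
  obtain ⟨u2, hu2⟩ := hB
  obtain ⟨p1, q1, h1⟩ := hdisj u1 u0
  have hb1 : d u1 p1 = b := by
    rcases hab q1 with h | h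
    · exact absurd (h1.trans h) (hu1 p1)
    · rw [h1, h]
  have hne_ab : a ≠ b := fun h => hu1 p1 (hb1.trans h.symm)
  obtain ⟨p2, q2, h2⟩ := hdisj u2 u0
  have ha2 : d u2 p2 = a := by
    rcases hab q2 with h | h
    · rw [h2, h]
    · exact absurd (h2.trans h) (hu2 p2)
  obtain ⟨p, q, he⟩ := hdisj u1 u2
  set e : Fin m := d u1 p with hedef
  have hea : e ≠ a := hu1 p
  have heb : e ≠ b := by rw [he]; exact hu2 q
  have hu1v : ∀ w, d u1 w = b ∨ d u1 w = e := by
    intro w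
    by_contra hc
    push_neg at hc
    exact hL u1 p1 p w (by rw [hb1, ← hedef]; exact Ne.symm heb)
      (by rw [hb1]; exact Ne.symm hc.1) (by rw [← hedef]; exact Ne.symm hc.2)
  have hu2v : ∀ w, d u2 w = a ∨ d u2 w = e := by
    intro w
    by_contra hc
    push_neg at hc
    have hq2 : d u2 q = e := he.symm
    exact hL u2 p2 q w (by rw [ha2, hq2]; exact hea.symm)
      (by rw [ha2]; exact Ne.symm hc.1) (by rw [hq2]; exact Ne.symm hc.2)
  have hcov : ∀ i : Fin m, i = a ∨ i = b ∨ i = e := by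
    intro i
    by_contra hc
    push_neg at hc
    obtain ⟨hia, hib, hie⟩ := hc
    obtain ⟨u', w', hw⟩ := hall i
    have hwa : d u' w' ≠ a := by rw [hw]; exact hia
    have hwb' : d u' w' ≠ b := by rw [hw]; exact hib
    have hwe : d u' w' ≠ e := by rw [hw]; exact hie
    rcases hab w' with h0 | h0 <;> rcases hu1v w' with h1' | h1'
    · exact hR w' u0 u1 u' (by rw [h0, h1']; exact hne_ab) (by rw [h0]; exact Ne.symm hwa)
        (by rw [h1']; exact Ne.symm hwb')
    · exact hR w' u0 u1 u' (by rw [h0, h1']; exact Ne.symm hea)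
        (by rw [h0]; exact Ne.symm hwa) (by rw [h1']; exact Ne.symm hwe)
    · rcases hu2v w' with h2' | h2'
      · exact hR w' u0 u2 u' (by rw [h0, h2']; exact Ne.symm hne_ab) (by rw [h0]; exact Ne.symm hwb')
          (by rw [h2']; exact Ne.symm hwa)
      · exact hR w' u0 u2 u' (by rw [h0, h2']; exact Ne.symm heb)
          (by rw [h0]; exact Ne.symm hwb') (by rw [h2']; exact Ne.symm hwe)
    · exact hR w' u0 u1 u' (by rw [h0, h1']; exact Ne.symm heb) (by rw [h0]; exact Ne.symm hwb')
        (by rw [h1']; exact Ne.symm hwe)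
  have hsub : (Finset.univ : Finset (Fin m)) ⊆ {a, b, e} := by
    intro i _
    rcases hcov i with h | h | h <;> simp [h]
  have h2 := Finset.card_le_card hsub
  rw [Finset.card_univ, Fintype.card_fin] at h2
  have h3 := Finset.card_insert_le a ({b, e} : Finset (Fin m))
  have h4 := Finset.card_insert_le b ({e} : Finset (Fin m))
  simp only [Finset.card_singleton] at h4
  omega

lemma conn_main {k m s t : ℕ} (hk : 1 ≤ k) (hm : k + 4 ≤ m)
    (d : Fin s → Fin t → Fin m)
    (hL : ∀ u w1 w2 w3, d u w1 ≠ d u w2 → d u w1 ≠ d u w3 → d u w2 ≠ d u w3 → False)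
    (hR : ∀ w u1 u2 u3, d u1 w ≠ d u2 w → d u1 w ≠ d u3 w → d u2 w ≠ d u3 w → False)
    (hall : ∀ i : Fin m, ∃ u w, d u w = i)
    (c1 : Fin m) (PL : ∀ u, ∃ w, d u w = c1) (PR : ∀ w, ∃ u, d u w = c1)
    (G : SimpleGraph (Fin s ⊕ Fin t))
    (hG : ∀ u w, d u w = c1 → G.Adj (Sum.inl u) (Sum.inr w))
    (S : Finset (Fin s ⊕ Fin t)) (hS : S.card < k) :
    (G.induce ((↑S : Set (Fin s ⊕ Fin t))ᶜ)).Connected := by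
  classical
  have uniqL : ∀ u w w', d u w ≠ c1 → d u w' ≠ c1 → d u w = d u w' := by
    intro u w w' h1 h2
    by_contra hne
    obtain ⟨w0, hw0⟩ := PL u
    exact hL u w0 w w' (by rw [hw0]; exact Ne.symm h1) (by rw [hw0]; exact Ne.symm h2) hne
  have uniqR : ∀ w u u', d u w ≠ c1 → d u' w ≠ c1 → d u w = d u' w := by
    intro w u u' h1 h2
    by_contra hne
    obtain ⟨u0, hu0⟩ := PR w
    exact hR w u0 u u' (by rw [hu0]; exact Ne.symm h1) (by rw [hu0]; exact Ne.symm h2) hne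
  choose urep wrep hrep using hall
  have hub : ∀ i j : Fin m, i ≠ c1 → j ≠ c1 → i ≠ j → d (urep j) (wrep i) = c1 := by
    intro i j hi hj hij
    by_contra hc
    have e1 : d (urep j) (wrep i) = i :=
      (uniqR (wrep i) (urep j) (urep i) hc (by rw [hrep i]; exact hi)).trans (hrep i)
    have e2 : d (urep j) (wrep i) = j :=
      (uniqL (urep j) (wrep i) (wrep j) hc (by rw [hrep j]; exact hj)).trans (hrep j)
    exact hij (e1.symm.trans e2)
  have attachL : ∀ (u : Fin s) (i i' : Fin m), i ≠ c1 → i' ≠ c1 → i ≠ i' →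
      d u (wrep i) = c1 ∨ d u (wrep i') = c1 := by
    intro u i i' hi hi' hii'
    by_contra hc
    push_neg at hc
    have e1 : d u (wrep i) = i :=
      (uniqR (wrep i) u (urep i) hc.1 (by rw [hrep i]; exact hi)).trans (hrep i)
    have e2 : d u (wrep i') = i' :=
      (uniqR (wrep i') u (urep i') hc.2 (by rw [hrep i']; exact hi')).trans (hrep i')
    exact hii' (e1.symm.trans ((uniqL u (wrep i) (wrep i') hc.1 hc.2).trans e2))
  have attachR : ∀ (w : Fin t) (j j' : Fin m), j ≠ c1 → j' ≠ c1 → j ≠ j' →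
      d (urep j) w = c1 ∨ d (urep j') w = c1 := by
    intro w j j' hj hj' hjj'
    by_contra hc
    push_neg at hc
    have e1 : d (urep j) w = j :=
      (uniqL (urep j) w (wrep j) hc.1 (by rw [hrep j]; exact hj)).trans (hrep j)
    have e2 : d (urep j') w = j' :=
      (uniqL (urep j') w (wrep j') hc.2 (by rw [hrep j']; exact hj')).trans (hrep j')
    exact hjj' (e1.symm.trans ((uniqR w (urep j) (urep j') hc.1 hc.2).trans e2))
  set RG : Finset (Fin m) := (Finset.univ.erase c1).filter (fun i => Sum.inr (wrep i) ∉ S)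
    with hRG
  set LG : Finset (Fin m) := (Finset.univ.erase c1).filter (fun i => Sum.inl (urep i) ∉ S)
    with hLG
  have hRGmem : ∀ i ∈ RG, i ≠ c1 ∧ Sum.inr (wrep i) ∉ S := by
    intro i hi
    rw [hRG, Finset.mem_filter, Finset.mem_erase] at hi
    exact ⟨hi.1.1, hi.2⟩
  have hLGmem : ∀ i ∈ LG, i ≠ c1 ∧ Sum.inl (urep i) ∉ S := by
    intro i hi
    rw [hLG, Finset.mem_filter, Finset.mem_erase] at hi
    exact ⟨hi.1.1, hi.2⟩
  have hcards : (Finset.univ.erase c1).card = m - 1 := by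
    rw [Finset.card_erase_of_mem (Finset.mem_univ c1), Finset.card_univ, Fintype.card_fin]
  have hRGcard : 4 ≤ RG.card := by
    set Bad : Finset (Fin m) := (Finset.univ.erase c1).filter (fun i => Sum.inr (wrep i) ∈ S)
      with hBadDef
    have hsub : Finset.univ.erase c1 ⊆ RG ∪ Bad := by
      intro i hi
      rw [Finset.mem_union, hRG, hBadDef, Finset.mem_filter, Finset.mem_filter]
      by_cases h : Sum.inr (wrep i) ∈ S
      · exact Or.inr ⟨hi, h⟩
      · exact Or.inl ⟨hi, h⟩
    have h1 := Finset.card_le_card hsub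
    have h2 := Finset.card_union_le RG Bad
    have hbad : Bad.card ≤ S.card := by
      apply Finset.card_le_card_of_injOn (fun i => Sum.inr (wrep i))
      · intro i hi
        rw [Finset.mem_coe, Finset.mem_filter] at hi
        exact hi.2
      · intro i hi i' hi' hEq
        rw [Finset.mem_coe, Finset.mem_filter, Finset.mem_erase] at hi hi'
        have hw : wrep i = wrep i' := Sum.inr.inj hEq
        have hx1 : d (urep i) (wrep i) = i := hrep i
        have hx2 : d (urep i') (wrep i) = i' := by rw [hw, hrep i']
        have := uniqR (wrep i) (urep i) (urep i') (by rw [hx1]; exact hi.1.1)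
          (by rw [hx2]; exact hi'.1.1)
        rw [hx1, hx2] at this
        exact this
    rw [hcards] at h1
    omega
  have hLGcard : 4 ≤ LG.card := by
    set Bad : Finset (Fin m) := (Finset.univ.erase c1).filter (fun i => Sum.inl (urep i) ∈ S)
      with hBadDef
    have hsub : Finset.univ.erase c1 ⊆ LG ∪ Bad := by
      intro i hi
      rw [Finset.mem_union, hLG, hBadDef, Finset.mem_filter, Finset.mem_filter]
      by_cases h : Sum.inl (urep i) ∈ S
      · exact Or.inr ⟨hi, h⟩
      · exact Or.inl ⟨hi, h⟩
    have h1 := Finset.card_le_card hsub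
    have h2 := Finset.card_union_le LG Bad
    have hbad : Bad.card ≤ S.card := by
      apply Finset.card_le_card_of_injOn (fun i => Sum.inl (urep i))
      · intro i hi
        rw [Finset.mem_coe, Finset.mem_filter] at hi
        exact hi.2
      · intro i hi i' hi' hEq
        rw [Finset.mem_coe, Finset.mem_filter, Finset.mem_erase] at hi hi'
        have hu : urep i = urep i' := Sum.inl.inj hEq
        have hx1 : d (urep i) (wrep i) = i := hrep i
        have hx2 : d (urep i) (wrep i') = i' := by rw [hu, hrep i']
        have := uniqL (urep i) (wrep i) (wrep i') (by rw [hx1]; exact hi.1.1)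
          (by rw [hx2]; exact hi'.1.1)
        rw [hx1, hx2] at this
        exact this
    rw [hcards] at h1
    omega
  have pick : ∀ (F : Finset (Fin m)), 3 ≤ F.card → ∀ x y : Fin m, ∃ z ∈ F, z ≠ x ∧ z ≠ y := by
    intro F hF x y
    have e1 : ∀ (Fs : Finset (Fin m)) (x' : Fin m), Fs.card - 1 ≤ (Fs.erase x').card := by
      intro Fs x'
      by_cases hx : x' ∈ Fs
      · rw [Finset.card_erase_of_mem hx]
      · rw [Finset.erase_eq_of_notMem hx]
        omega
    have e2 := e1 F x
    have e3 := e1 (F.erase x) y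
    obtain ⟨z, hz⟩ := Finset.card_pos.mp (by omega : 0 < ((F.erase x).erase y).card)
    rw [Finset.mem_erase, Finset.mem_erase] at hz
    exact ⟨z, hz.2.2, hz.2.1, hz.1⟩
  have memT : ∀ v : Fin s ⊕ Fin t, v ∉ S → v ∈ ((↑S : Set (Fin s ⊕ Fin t))ᶜ) := by
    intro v hv
    simpa using hv
  set GI := G.induce ((↑S : Set (Fin s ⊕ Fin t))ᶜ) with hGI
  have istep : ∀ (x y : Fin s ⊕ Fin t) (hx : x ∈ ((↑S : Set (Fin s ⊕ Fin t))ᶜ))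
      (hy : y ∈ ((↑S : Set (Fin s ⊕ Fin t))ᶜ)), G.Adj x y →
      GI.Reachable ⟨x, hx⟩ ⟨y, hy⟩ := by
    intro x y hx hy h
    exact SimpleGraph.Adj.reachable (SimpleGraph.comap_adj.mpr h)
  have toHub : ∀ (v : Fin s ⊕ Fin t) (hv : v ∉ S), ∃ i, ∃ hi : i ∈ RG,
      GI.Reachable ⟨v, memT v hv⟩ ⟨Sum.inr (wrep i), memT _ (hRGmem i hi).2⟩ := by
    obtain ⟨i1, hi1, i2, hi2, h12⟩ := Finset.one_lt_card.mp (by omega : 1 < RG.card)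
    obtain ⟨j1, hj1, j2, hj2, hj12⟩ := Finset.one_lt_card.mp (by omega : 1 < LG.card)
    intro v hv
    cases v with
    | inl u =>
      rcases attachL u i1 i2 (hRGmem _ hi1).1 (hRGmem _ hi2).1 h12 with h | h
      · exact ⟨i1, hi1, istep _ _ _ _ (hG u (wrep i1) h)⟩
      · exact ⟨i2, hi2, istep _ _ _ _ (hG u (wrep i2) h)⟩
    | inr w =>
      have main : ∀ j ∈ LG, d (urep j) w = c1 → ∃ i, ∃ hi : i ∈ RG,
          GI.Reachable ⟨Sum.inr w, memT _ hv⟩ ⟨Sum.inr (wrep i), memT _ (hRGmem i hi).2⟩ := by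
        intro j hj hdw
        obtain ⟨i, hi, hij, -⟩ := pick RG (by omega) j j
        refine ⟨i, hi, ?_⟩
        refine (istep _ _ (memT _ hv) (memT _ (hLGmem _ hj).2)
          ((hG (urep j) w hdw).symm)).trans ?_
        exact istep _ _ _ _ (hG (urep j) (wrep i) (hub i j (hRGmem _ hi).1 (hLGmem _ hj).1 hij))
      rcases attachR w j1 j2 (hLGmem _ hj1).1 (hLGmem _ hj2).1 hj12 with h | h
      · exact main j1 hj1 h
      · exact main j2 hj2 h
  have hubhub : ∀ i, ∀ hi : i ∈ RG, ∀ i', ∀ hi' : i' ∈ RG,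
      GI.Reachable ⟨Sum.inr (wrep i), memT _ (hRGmem i hi).2⟩
        ⟨Sum.inr (wrep i'), memT _ (hRGmem i' hi').2⟩ := by
    intro i hi i' hi'
    obtain ⟨j, hj, hji, hji'⟩ := pick LG (by omega) i i'
    have r1 := istep _ _ (memT _ (hLGmem _ hj).2) (memT _ (hRGmem _ hi).2)
      (hG (urep j) (wrep i) (hub i j (hRGmem _ hi).1 (hLGmem _ hj).1 (Ne.symm hji)))
    have r2 := istep _ _ (memT _ (hLGmem _ hj).2) (memT _ (hRGmem _ hi').2)
      (hG (urep j) (wrep i') (hub i' j (hRGmem _ hi').1 (hLGmem _ hj).1 (Ne.symm hji')))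
    exact r1.symm.trans r2
  rw [SimpleGraph.connected_iff]
  constructor
  · intro v v'
    obtain ⟨i, hi, r⟩ := toHub v.1 (fun h => v.2 (Finset.mem_coe.mpr h))
    obtain ⟨i', hi', r'⟩ := toHub v'.1 (fun h => v'.2 (Finset.mem_coe.mpr h))
    exact (r.trans (hubhub i hi i' hi')).trans r'.symm
  · obtain ⟨i, hi⟩ := Finset.card_pos.mp (by omega : 0 < RG.card)
    exact ⟨⟨Sum.inr (wrep i), memT _ (hRGmem i hi).2⟩⟩

/-- Rainbow-`K_{1,3}`-free colorings of `K_{s,t}` with `m ≥ k+4` colors have a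
spanning `k`-connected monochromatic subgraph. -/
theorem stmt_8 (k m s t : ℕ) (hk : 1 ≤ k) (hm : k + 4 ≤ m)
    (hs : m - 1 ≤ s) (ht : m - 1 ≤ t)
    (c : Sym2 (Fin s ⊕ Fin t) → Fin m) (hall : UsesAllBi c)
    (hrb : ¬ RainbowCopy claw (completeBipartiteGraph (Fin s) (Fin t)) c) :
    ∃ i : Fin m, KConn k (monoBiGraph c i) := by
  classical
  have hL : ∀ (u : Fin s) (w1 w2 w3 : Fin t),
      c s(Sum.inl u, Sum.inr w1) ≠ c s(Sum.inl u, Sum.inr w2) →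
      c s(Sum.inl u, Sum.inr w1) ≠ c s(Sum.inl u, Sum.inr w3) →
      c s(Sum.inl u, Sum.inr w2) ≠ c s(Sum.inl u, Sum.inr w3) → False := by
    intro u w1 w2 w3 h12 h13 h23
    refine hrb (claw_copy' _ c (Sum.inl u) ![Sum.inr w1, Sum.inr w2, Sum.inr w3] ?_ ?_)
    · intro j
      fin_cases j <;> simp
    · intro j j' h
      fin_cases j <;> fin_cases j' <;> simp_all
  have hR : ∀ (w : Fin t) (u1 u2 u3 : Fin s),
      c s(Sum.inl u1, Sum.inr w) ≠ c s(Sum.inl u2, Sum.inr w) →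
      c s(Sum.inl u1, Sum.inr w) ≠ c s(Sum.inl u3, Sum.inr w) →
      c s(Sum.inl u2, Sum.inr w) ≠ c s(Sum.inl u3, Sum.inr w) → False := by
    intro w u1 u2 u3 h12 h13 h23
    have flip : ∀ u' : Fin s,
        (s(Sum.inr w, Sum.inl u') : Sym2 (Fin s ⊕ Fin t)) = s(Sum.inl u', Sum.inr w) :=
      fun _ => Sym2.eq_swap
    refine hrb (claw_copy' _ c (Sum.inr w) ![Sum.inl u1, Sum.inl u2, Sum.inl u3] ?_ ?_)
    · intro j
      fin_cases j <;> simp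
    · intro j j' h
      have hmv : ∀ j : Fin 3, (![Sum.inl u1, Sum.inl u2, Sum.inl u3] : Fin 3 → Fin s ⊕ Fin t) j
          = Sum.inl ((![u1, u2, u3] : Fin 3 → Fin s) j) := by
        intro j
        fin_cases j <;> rfl
      rw [hmv j, hmv j', flip, flip] at h
      fin_cases j <;> fin_cases j' <;> simp_all
  obtain ⟨c1, PL, PR⟩ := bip_main hk hm hs ht
    (fun u w => c s(Sum.inl u, Sum.inr w)) hL hR hall
  refine ⟨c1, ?_, ?_⟩
  · simp only [Fintype.card_sum, Fintype.card_fin]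
    omega
  · intro S hS
    refine conn_main hk hm (fun u w => c s(Sum.inl u, Sum.inr w)) hL hR hall c1 PL PR
      (monoBiGraph c c1) ?_ S hS
    intro u w h
    simp only [monoBiGraph, SimpleGraph.fromRel_adj]
    exact ⟨by simp, Or.inl ⟨by simp, h⟩⟩
end
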